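/- arXiv:1209.4110 — 12 statements merged into one kernel-verified Lean document; each statement's English description precedes it below -/
import Mathlib

section
/- The sequence of modified Bernoulli numbers of odd index, B*_{2n+1} = sum_{r=0}^{2n+1} C(2n+1+r, 2r) B_r/(2n+1+r), is periodic in n with period 6, taking the values 3/4, -1/4, -1/4, 1/4, 1/4, -3/4 for n ≡ 0,1,2,3,4,5 (mod 6). -/
/-!
Let `L : ℚ[X] → ℚ` be the umbral evaluation `X ^ r ↦ B_r` and `g_n = C_n(X + 2)`, where `C_n` is the
Vieta–Lucas polynomial `C_n(x + 1/x) = x ^ n + x⁻¹ ^ n`. The coefficient of `X ^ r` in `g_n` is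
`2n / (n + r) * binom(n + r, 2r)`, so `L g_n = 2n B*_n`. From `(-1) ^ r B_r = B_r(1)` and
`B_r(y + 1) - B_r(y) = r y ^ (r - 1)` one gets `L (p(-4 - X)) = L p - (p'(-1) + p'(-2) + p'(-3))`,
while `g_n(-4 - X) = (-1) ^ n g_n`. For odd `n` this gives
`4n B*_n = g_n'(-1) + g_n'(-2) + g_n'(-3) = n (S_{n-1}(1) + S_{n-1}(0) + S_{n-1}(-1))`, and
`m ↦ S_m(1), S_m(0), S_m(-1)` have periods `6, 4, 3`.
-/

open Finset

/-- The modified Bernoulli numbers of Zagier. -/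
noncomputable def zagierBstar (n : ℕ) : ℚ :=
  ∑ r ∈ Finset.range (n + 1), ((n + r).choose (2 * r) : ℚ) * bernoulli r / (n + r)

/-- The coefficient of `X ^ r` in `C_n(X + 2)`; at `n = r = 0` the truncated `n + r - 1` still gives
`2`, the constant polynomial `C_0`. -/
def lucasCoeff (n r : ℕ) : ℕ := (n + r).choose (2 * r) + (n + r - 1).choose (2 * r)

theorem lucasCoeff_zero_right (n : ℕ) : lucasCoeff n 0 = 2 := by
  simp [lucasCoeff]

theorem lucasCoeff_eq_zero_of_lt {n r : ℕ} (h : n < r) : lucasCoeff n r = 0 := by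
  rw [lucasCoeff, Nat.choose_eq_zero_of_lt (by omega), Nat.choose_eq_zero_of_lt (by omega)]

theorem lucasCoeff_add_two (n s : ℕ) :
    lucasCoeff (n + 2) (s + 1) + lucasCoeff n (s + 1)
      = 2 * lucasCoeff (n + 1) (s + 1) + lucasCoeff (n + 1) s := by
  simp only [lucasCoeff, show n + 2 + (s + 1) = n + s + 3 by omega,
    show n + s + 3 - 1 = n + s + 2 by omega, show n + (s + 1) = n + s + 1 by omega,
    show n + s + 1 - 1 = n + s by omega, show n + 1 + (s + 1) = n + s + 2 by omega,
    show n + s + 2 - 1 = n + s + 1 by omega, show n + 1 + s = n + s + 1 by omega,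
    show 2 * (s + 1) = 2 * s + 2 by omega]
  have h₁ : (n + s + 3).choose (2 * s + 2)
      = (n + s + 2).choose (2 * s + 1) + (n + s + 2).choose (2 * s + 2) :=
    Nat.choose_succ_succ' _ _
  have h₂ : (n + s + 2).choose (2 * s + 2)
      = (n + s + 1).choose (2 * s + 1) + (n + s + 1).choose (2 * s + 2) :=
    Nat.choose_succ_succ' _ _
  have h₃ : (n + s + 2).choose (2 * s + 1)
      = (n + s + 1).choose (2 * s) + (n + s + 1).choose (2 * s + 1) :=
    Nat.choose_succ_succ' _ _
  have h₄ : (n + s + 1).choose (2 * s + 2)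
      = (n + s).choose (2 * s + 1) + (n + s).choose (2 * s + 2) :=
    Nat.choose_succ_succ' _ _
  have h₅ : (n + s + 1).choose (2 * s + 1) = (n + s).choose (2 * s) + (n + s).choose (2 * s + 1) :=
    Nat.choose_succ_succ' _ _
  omega

theorem add_mul_lucasCoeff (n r : ℕ) :
    (n + r) * lucasCoeff n r = 2 * n * (n + r).choose (2 * r) := by
  rcases Nat.lt_or_ge n r with h | h
  · rw [lucasCoeff_eq_zero_of_lt h, Nat.choose_eq_zero_of_lt (by omega), mul_zero, mul_zero]
  rcases Nat.eq_zero_or_pos (n + r) with h0 | h0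
  · obtain ⟨rfl, rfl⟩ : n = 0 ∧ r = 0 := by omega
    rfl
  obtain ⟨m, hm⟩ : ∃ m, n + r = m + 1 := ⟨n + r - 1, by omega⟩
  have key : (m + 1) * m.choose (2 * r) = (m + 1).choose (2 * r) * (m + 1 - 2 * r) :=
    (Nat.add_one_mul_choose_eq m (2 * r)).trans (Nat.choose_succ_right_eq (m + 1) (2 * r))
  rw [lucasCoeff, hm, Nat.add_sub_cancel]
  zify [show 2 * r ≤ m + 1 by omega] at key ⊢
  have hmz : (n : ℤ) + r = m + 1 := by exact_mod_cast hm
  linear_combination key - 2 * ((m + 1).choose (2 * r) : ℤ) * hmz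

namespace Polynomial.Chebyshev

variable (R : Type*) [CommRing R]

theorem C_derivative_eq_S (n : ℤ) : derivative (C R n) = n * S R (n - 1) := by
  induction n using Polynomial.Chebyshev.induct' with
  | zero => simp
  | one => simp
  | add_two n ih1 ih2 =>
    have h₁ := congr_arg derivative (C_add_two R n)
    have h₂ := S_sub_one R n
    have h₃ := C_eq_S_sub_X_mul_S R (n + 1)
    simp only [derivative_sub, derivative_mul, derivative_X] at h₁
    linear_combination (norm := (push_cast; ring_nf)) h₁ - ih2 + (X : R[X]) * ih1 + h₃ - n * h₂
  | neg n ih =>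
    rw [C_neg, ih, S_neg_sub_one]
    push_cast
    ring

theorem C_comp_neg_X (n : ℤ) : (C R n).comp (-X) = (n.negOnePow : R[X]) * C R n := by
  induction n using Polynomial.Chebyshev.induct with
  | zero => simp
  | one => simp
  | add_two n ih1 ih2 =>
    simp only [C_add_two, sub_comp, mul_comp, X_comp, ih1, ih2, Int.negOnePow_add,
      Int.negOnePow_one, Int.negOnePow_even 2 even_two]
    push_cast
    ring
  | neg_add_one n ih1 ih2 =>
    simp only [C_sub_one, sub_comp, mul_comp, X_comp, ih1, ih2, Int.negOnePow_add,
      Int.negOnePow_sub, Int.negOnePow_one]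
    push_cast
    ring

theorem S_eval_neg (n : ℤ) (x : R) : (S R n).eval (-x) = n.negOnePow * (S R n).eval x := by
  induction n using Polynomial.Chebyshev.induct with
  | zero => simp
  | one => simp
  | add_two n ih1 ih2 =>
    simp only [S_add_two, eval_sub, eval_mul, eval_X, ih1, ih2, Int.negOnePow_add,
      Int.negOnePow_one, Int.negOnePow_even 2 even_two]
    push_cast
    ring
  | neg_add_one n ih1 ih2 =>
    simp only [S_sub_one, eval_sub, eval_mul, eval_X, ih1, ih2, Int.negOnePow_add,
      Int.negOnePow_sub, Int.negOnePow_one]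
    push_cast
    ring

theorem S_eval_two_mul_zero (n : ℕ) : (S R (2 * n)).eval 0 = (-1) ^ n := by
  induction n with
  | zero => simp
  | succ n ih =>
    rw [Nat.cast_succ, mul_add_one, S_add_two]
    simp [ih, pow_succ]

theorem S_add_three_eval_one (n : ℤ) : (S R (n + 3)).eval 1 = -(S R n).eval 1 := by
  rw [show n + 3 = n + 1 + 2 by ring, S_add_two, show n + 1 + 1 = n + 2 by ring, S_add_two]
  simp

theorem S_eval_two_mul_one (n : ℕ) : (S R (2 * n)).eval 1 = 1 - (n % 3 : ℕ) := by
  induction n using Nat.strong_induction_on with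
  | _ n ih =>
    rcases lt_or_ge n 3 with h | h
    · interval_cases n
      · simp
      · simp [S_two]
      · rw [show (2 : ℤ) * (2 : ℕ) = 1 + 3 by norm_num, S_add_three_eval_one]
        norm_num
    · obtain ⟨m, rfl⟩ : ∃ m, n = m + 3 := ⟨n - 3, by omega⟩
      rw [show (2 * ((m + 3 : ℕ) : ℤ)) = 2 * m + 3 + 3 by push_cast; ring, S_add_three_eval_one,
        S_add_three_eval_one, neg_neg, ih m (by omega), Nat.add_mod_right]

theorem coeff_C_comp_X_add_two (n r : ℕ) : ((C R n).comp (X + 2)).coeff r = lucasCoeff n r := by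
  induction n using Nat.twoStepInduction generalizing r with
  | zero =>
    rcases r with _ | r
    · simp [lucasCoeff]
    · simp [lucasCoeff_eq_zero_of_lt, coeff_ofNat_succ]
  | one =>
    rcases r with _ | _ | r
    · simp [lucasCoeff]
    · simp [lucasCoeff]
    · simp [lucasCoeff_eq_zero_of_lt, coeff_X, coeff_ofNat_succ]
  | more n ih1 ih2 =>
    have hrec : (C R (n + 2 : ℕ)).comp (X + 2)
        = (X + 2) * (C R (n + 1 : ℕ)).comp (X + 2) - (C R n).comp (X + 2) := by
      rw [show ((n + 2 : ℕ) : ℤ) = n + 2 by push_cast; ring,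
        show ((n + 1 : ℕ) : ℤ) = n + 1 by push_cast; ring, C_add_two, sub_comp, mul_comp, X_comp]
    rcases r with _ | s
    · rw [hrec, coeff_sub, mul_coeff_zero, ih1, ih2]
      norm_num [lucasCoeff_zero_right]
    · rw [hrec, coeff_sub, add_mul, coeff_add, coeff_X_mul, coeff_ofNat_mul, ih1, ih2, ih2]
      have h := congrArg (Nat.cast : ℕ → R) (lucasCoeff_add_two n s)
      push_cast at h
      linear_combination -h

theorem natDegree_C_comp_X_add_two_le (n : ℕ) : ((C R n).comp (X + 2)).natDegree ≤ n :=
  natDegree_le_iff_coeff_eq_zero.mpr fun r hr => by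
    rw [coeff_C_comp_X_add_two, lucasCoeff_eq_zero_of_lt (by exact_mod_cast hr), Nat.cast_zero]

theorem derivative_C_comp_X_add_two (n : ℤ) :
    derivative ((C R n).comp (X + 2)) = n * (S R (n - 1)).comp (X + 2) := by
  simp [derivative_comp, C_derivative_eq_S]

theorem C_comp_X_add_two_comp_neg_four_sub_X (n : ℤ) :
    ((C R n).comp (X + 2)).comp (-4 - X) = (n.negOnePow : R[X]) * (C R n).comp (X + 2) := by
  rw [comp_assoc, show (X + 2 : R[X]).comp (-4 - X) = (-X).comp (X + 2) by simp; ring,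
    ← comp_assoc, C_comp_neg_X, mul_comp, intCast_comp]

end Polynomial.Chebyshev

open Polynomial

noncomputable def bernoulliUmbral : ℚ[X] →ₗ[ℚ] ℚ :=
  lsum fun r => LinearMap.mulRight ℚ (_root_.bernoulli r)

theorem bernoulliUmbral_monomial (r : ℕ) (a : ℚ) :
    bernoulliUmbral (monomial r a) = a * _root_.bernoulli r := by
  simp [bernoulliUmbral]

theorem bernoulliUmbral_eq_sum_range {p : ℚ[X]} {n : ℕ} (hp : p.natDegree ≤ n) :
    bernoulliUmbral p = ∑ r ∈ range (n + 1), p.coeff r * _root_.bernoulli r := by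
  rw [bernoulliUmbral, lsum_apply, sum_over_range' _ (fun r => by simp) _ (Nat.lt_succ_of_le hp)]
  simp

theorem bernoulliUmbral_C_mul (a : ℚ) (p : ℚ[X]) :
    bernoulliUmbral (C a * p) = a * bernoulliUmbral p := by
  rw [← smul_eq_C_mul, map_smul, smul_eq_mul]

theorem bernoulliUmbral_X_add_C_pow (s : ℕ) (y : ℚ) :
    bernoulliUmbral ((X + C y) ^ s) = (Polynomial.bernoulli s).eval y := by
  rw [add_pow, map_sum, Polynomial.bernoulli, eval_finsetSum]
  refine sum_congr rfl fun k _ => ?_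
  rw [← C_pow, ← C_eq_natCast, mul_assoc, ← C_mul, mul_comm, C_mul_X_pow_eq_monomial,
    bernoulliUmbral_monomial, eval_monomial]
  ring

theorem bernoulliUmbral_comp_X_add_C_one_add (p : ℚ[X]) (y : ℚ) :
    bernoulliUmbral (p.comp (X + C (1 + y)))
      = bernoulliUmbral (p.comp (X + C y)) + (derivative p).eval y := by
  induction p using Polynomial.induction_on' with
  | add p q hp hq =>
    rw [add_comp, add_comp, map_add bernoulliUmbral, map_add bernoulliUmbral, hp, hq,
      derivative_add, eval_add]
    ring
  | monomial s a =>
    simp only [monomial_comp, bernoulliUmbral_C_mul, bernoulliUmbral_X_add_C_pow,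
      Polynomial.bernoulli_eval_one_add, derivative_monomial, eval_monomial]
    ring

theorem bernoulliUmbral_comp_C_sub_X (p : ℚ[X]) (a : ℚ) :
    bernoulliUmbral (p.comp (C a - X)) = bernoulliUmbral (p.comp (X + C (1 + a))) := by
  induction p using Polynomial.induction_on' with
  | add p q hp hq =>
    rw [add_comp, add_comp, map_add bernoulliUmbral, map_add bernoulliUmbral, hp, hq]
  | monomial s b =>
    have h := congr_arg (eval (-a)) (Polynomial.bernoulli_comp_one_sub_X s)
    rw [eval_comp, eval_mul, eval_sub, eval_one, eval_X, sub_neg_eq_add, eval_pow, eval_neg,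
      eval_one] at h
    rw [monomial_comp, monomial_comp, show C a - X = C (-1) * (X + C (-a)) by simp; ring, mul_pow,
      ← C_pow, ← mul_assoc, ← C_mul, bernoulliUmbral_C_mul, bernoulliUmbral_C_mul,
      bernoulliUmbral_X_add_C_pow, bernoulliUmbral_X_add_C_pow, h]
    ring

theorem bernoulliUmbral_eq_comp_X_add_C_neg_add_sum (p : ℚ[X]) (k : ℕ) :
    bernoulliUmbral p = bernoulliUmbral (p.comp (X + C (-(k : ℚ))))
      + ∑ i ∈ range k, (derivative p).eval (-((i : ℚ) + 1)) := by
  induction k with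
  | zero => simp
  | succ k ih =>
    have h := bernoulliUmbral_comp_X_add_C_one_add p (-(k + 1))
    rw [show (1 : ℚ) + -(k + 1) = -k by ring] at h
    rw [ih, h, sum_range_succ]
    push_cast
    ring

theorem two_mul_bernoulliUmbral_of_comp_eq_neg {p : ℚ[X]} {k : ℕ}
    (hp : p.comp (C (-((k : ℚ) + 1)) - X) = -p) :
    2 * bernoulliUmbral p = ∑ i ∈ range k, (derivative p).eval (-((i : ℚ) + 1)) := by
  have h := congr_arg bernoulliUmbral hp
  rw [bernoulliUmbral_comp_C_sub_X, show (1 : ℚ) + -(k + 1) = -k by ring,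
    map_neg bernoulliUmbral] at h
  linear_combination bernoulliUmbral_eq_comp_X_add_C_neg_add_sum p k + h

open Polynomial.Chebyshev in
theorem bernoulliUmbral_C_comp_X_add_two {n : ℕ} (hn : n ≠ 0) :
    bernoulliUmbral ((C ℚ n).comp (X + 2)) = 2 * n * zagierBstar n := by
  rw [bernoulliUmbral_eq_sum_range (natDegree_C_comp_X_add_two_le ℚ n), zagierBstar, mul_sum]
  refine sum_congr rfl fun r _ => ?_
  have hnr : (n + r : ℚ) ≠ 0 := by positivity
  have h : (n + r : ℚ) * lucasCoeff n r = 2 * n * (n + r).choose (2 * r) := by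
    exact_mod_cast add_mul_lucasCoeff n r
  rw [coeff_C_comp_X_add_two]
  field_simp
  linear_combination _root_.bernoulli r * h

open Polynomial.Chebyshev in
theorem four_mul_zagierBstar_two_mul_add_one (n : ℕ) :
    4 * zagierBstar (2 * n + 1) = 2 * (S ℚ (2 * n)).eval 1 + (S ℚ (2 * n)).eval 0 := by
  set p := (C ℚ (2 * n + 1 : ℕ)).comp (X + 2)
  have hodd : p.comp (Polynomial.C (-((3 : ℕ) + 1 : ℚ)) - X) = -p := by
    rw [show Polynomial.C (-((3 : ℕ) + 1 : ℚ)) = -4 by norm_num [map_ofNat],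
      C_comp_X_add_two_comp_neg_four_sub_X, Int.negOnePow_odd _ ⟨n, by push_cast; ring⟩,
      Units.val_neg, Units.val_one, Int.cast_neg, Int.cast_one, neg_one_mul]
  have hderiv : derivative p = ((2 * n + 1 : ℕ) : ℚ[X]) * (S ℚ (2 * n)).comp (X + 2) := by
    rw [derivative_C_comp_X_add_two, show ((2 * n + 1 : ℕ) : ℤ) - 1 = 2 * n by push_cast; ring,
      Int.cast_natCast]
  have hL : bernoulliUmbral p = 2 * (2 * n + 1 : ℕ) * zagierBstar (2 * n + 1) :=
    bernoulliUmbral_C_comp_X_add_two (by omega)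
  have hsymm : (S ℚ (2 * n)).eval (-1) = (S ℚ (2 * n)).eval 1 := by
    rw [S_eval_neg, Int.negOnePow_even _ ⟨n, by ring⟩, Units.val_one, Int.cast_one, one_mul]
  have h := two_mul_bernoulliUmbral_of_comp_eq_neg hodd
  simp only [sum_range_succ, sum_range_zero, hderiv, eval_mul, eval_natCast, eval_comp, eval_add,
    eval_X, eval_ofNat, hL] at h
  norm_num at h
  rw [hsymm] at h
  have hN : (2 * n + 1 : ℚ) ≠ 0 := by positivity
  apply mul_left_cancel₀ hN
  linear_combination h

open Polynomial.Chebyshev in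
theorem zagierBstar_odd_periodic (n : ℕ) :
    zagierBstar (2 * n + 1) =
      ![(3 : ℚ)/4, -1/4, -1/4, 1/4, 1/4, -3/4] ⟨n % 6, Nat.mod_lt _ (by norm_num)⟩ := by
  have h := four_mul_zagierBstar_two_mul_add_one n
  rw [S_eval_two_mul_one, S_eval_two_mul_zero, neg_one_pow_eq_pow_mod_two,
    show n % 3 = n % 6 % 3 by omega, show n % 2 = n % 6 % 2 by omega] at h
  obtain ⟨c, hc, hnc⟩ : ∃ c, c < 6 ∧ n % 6 = c := ⟨_, Nat.mod_lt _ (by norm_num), rfl⟩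
  simp only [hnc] at h ⊢
  interval_cases c <;> norm_num at h ⊢ <;> linarith
end

section
/- For n > 0, the modified Bernoulli number satisfies B*_n - 1/n = sum_{k=1}^{n} C(n+k-1, n-k) * B_k/(2k). -/
open Finset

/-! The `r = 0` term of `zagierBstar n` is `B₀ / n = 1 / n`; each term with `r ≥ 1` is matched
with the right-hand side by symmetry `C(n+r-1, n-r) = C(n+r-1, 2r-1)` and absorption
`(n+r) C(n+r-1, 2r-1) = 2r C(n+r, 2r)`. -/

theorem Nat.cast_choose_sub_div_two_mul {k n : ℕ} (hk : 0 < k) (hkn : k ≤ n) :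
    ((n + k - 1).choose (n - k) : ℚ) / (2 * k) = ((n + k).choose (2 * k) : ℚ) / (n + k) := by
  obtain ⟨j, rfl⟩ : ∃ j, k = j + 1 := ⟨k - 1, by omega⟩
  obtain ⟨m, rfl⟩ : ∃ m, n = j + 1 + m := ⟨n - (j + 1), by omega⟩
  have hsymm : (2 * j + 1 + m).choose m = (2 * j + 1 + m).choose (2 * j + 1) :=
    Nat.choose_symm_add.symm.trans (by rw [add_comm])
  have habsorb : ((2 * j + 1 + m + 1 : ℕ) : ℚ) * (2 * j + 1 + m).choose (2 * j + 1)
      = (2 * j + 1 + m + 1).choose (2 * j + 1 + 1) * ((2 * j + 1 + 1 : ℕ) : ℚ) := by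
    exact_mod_cast Nat.add_one_mul_choose_eq (2 * j + 1 + m) (2 * j + 1)
  rw [show j + 1 + m + (j + 1) - 1 = 2 * j + 1 + m by omega, show j + 1 + m - (j + 1) = m by omega,
    hsymm, show j + 1 + m + (j + 1) = 2 * j + 1 + m + 1 by omega,
    show 2 * (j + 1) = 2 * j + 1 + 1 by omega, div_eq_div_iff (by positivity) (by positivity)]
  push_cast at habsorb ⊢
  linear_combination habsorb

theorem zagierBstar_sub_general (n : ℕ) :
    zagierBstar n - 1 / n =
      ∑ k ∈ Finset.Icc 1 n, ((n + k - 1).choose (n - k) : ℚ) * bernoulli k / (2 * k) := by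
  rw [zagierBstar, range_eq_Ico, sum_eq_sum_Ico_succ_bot n.succ_pos]
  simp only [Nat.mul_zero, Nat.choose_zero_right, bernoulli_zero, Nat.cast_one,
    Nat.cast_zero, add_zero, one_mul, add_sub_cancel_left]
  refine sum_congr rfl fun k hk => ?_
  obtain ⟨hk, hkn⟩ := mem_Icc.mp hk
  rw [mul_div_right_comm, ← Nat.cast_choose_sub_div_two_mul hk hkn, div_mul_eq_mul_div]

theorem zagierBstar_sub (n : ℕ) (hn : 0 < n) :
    zagierBstar n - 1 / n =
      ∑ k ∈ Finset.Icc 1 n, ((n + k - 1).choose (n - k) : ℚ) * bernoulli k / (2 * k) :=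
  zagierBstar_sub_general n
end

section
/- For n ≥ 1, the Bernoulli number B_n is recovered from the modified Bernoulli numbers via B_n = 2n * sum_{k=1}^{n} (-1)^{n+k} [C(2n-1, n-k) - C(2n-1, n-k-1)] B*_k + 2(-1)^n C(2n-1, n). -/
open Finset

/-- Binomial coefficient with integer lower index, zero when the lower index is negative. -/
def intChoose (a : ℕ) (b : ℤ) : ℚ :=
  if 0 ≤ b then (a.choose b.toNat : ℚ) else 0

/-!
Multiply by `2n`. The ballot identity `n (C(2n-1, n-k) - C(2n-1, n-k-1)) = k C(2n, n-k)` turns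
the sum into `∑ₖ (-1)^(n+k) 2 C(2n, n-k) k B*ₖ`, and
`k B*ₖ = 1 + ∑_{r ≥ 1} B_r k C(k+r-1, 2r-1) / (2r)`, where `k C(k+r-1, 2r-1)` is, up to the
factor `(2r-1)!`, the value at `k` of the central factorial `x (x+r-1) ⋯ (x-r+1)`, an even
polynomial of degree `2r`. For an even polynomial `p` the symmetric sum
`∑_{k=-n}^{n} (-1)^k C(2n, n-k) p(k)` is a `2n`-th finite difference, so it vanishes when
`deg p < 2n`. This kills the coefficient of `B_r` for `0 < r < n` and evaluates the constant term
to `-2 (-1)^n C(2n-1, n)`; for `r = n` only `k = n` survives and the coefficient of `B_n` is `1`.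
-/

theorem neg_one_pow_sub_eq_neg_one_pow_add {R : Type*} [Monoid R] [HasDistribNeg R] {n k : ℕ}
    (h : k ≤ n) : (-1 : R) ^ (n - k) = (-1) ^ (n + k) := by
  rw [show n + k = n - k + 2 * k by omega, pow_add, pow_mul, neg_one_sq, one_pow, mul_one]

theorem sum_range_two_mul_add_one {M : Type*} [AddCommMonoid M] (f : ℕ → M) (n : ℕ) :
    ∑ j ∈ range (2 * n + 1), f j = f n + ∑ k ∈ Icc 1 n, (f (n - k) + f (n + k)) := by
  induction n generalizing f with
  | zero => simp
  | succ n ih =>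
    rw [show 2 * (n + 1) + 1 = 2 * n + 1 + 1 + 1 by ring, sum_range_succ, sum_range_succ',
      ih (fun j => f (j + 1)), sum_Icc_succ_top (by omega)]
    have hshift : ∀ k ∈ Icc 1 n,
        f (n - k + 1) + f (n + k + 1) = f (n + 1 - k) + f (n + 1 + k) := by
      intro k hk
      rw [mem_Icc] at hk
      rw [show n - k + 1 = n + 1 - k by omega, add_right_comm]
    rw [sum_congr rfl hshift, Nat.sub_self, show n + 1 + (n + 1) = 2 * n + 1 + 1 by ring]
    abel

section Polynomial

open Polynomial

variable {R : Type*} [CommRing R]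

theorem sum_range_neg_one_pow_mul_choose_mul_eval_eq_zero (P : R[X]) {N : ℕ}
    (hP : P.natDegree < N) (y : R) :
    ∑ j ∈ range (N + 1), (-1) ^ (N - j) * (N.choose j : R) * P.eval (y + j) = 0 := by
  have h := congrFun (P.fwdDiff_iter_eq_zero_of_degree_lt hP) y
  rw [fwdDiff_iter_eq_sum_shift] at h
  simpa [zsmul_eq_mul] using h

theorem two_mul_sum_Icc_neg_one_pow_mul_choose_mul_eval_of_even (P : R[X]) {n : ℕ}
    (hP : P.natDegree < 2 * n) (heven : ∀ x, P.eval (-x) = P.eval x) :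
    2 * ∑ k ∈ Icc 1 n, (-1) ^ (n + k) * ((2 * n).choose (n - k) : R) * P.eval (k : R) =
      -((-1) ^ n * ((2 * n).choose n : R) * P.eval 0) := by
  have h := sum_range_neg_one_pow_mul_choose_mul_eval_eq_zero P hP (-n)
  rw [sum_range_two_mul_add_one] at h
  rw [eq_neg_iff_add_eq_zero, add_comm]
  convert h using 2
  · congr 2 <;> simp [two_mul]
  · rw [two_mul, ← sum_add_distrib]
    refine sum_congr rfl fun k hk => ?_
    rw [mem_Icc] at hk
    rw [show 2 * n - (n - k) = n + k by omega, show 2 * n - (n + k) = n - k by omega,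
      neg_one_pow_sub_eq_neg_one_pow_add hk.2,
      Nat.choose_symm_of_eq_add (show 2 * n = n + k + (n - k) by omega), Nat.cast_sub hk.2,
      Nat.cast_add, show -(n : R) + (n - k) = -k by ring, show -(n : R) + (n + k) = k by ring,
      heven]

variable (R) in
/-- The central factorial `x^[2s+2] = x (x + s) (x + s - 1) ⋯ (x - s)`. -/
noncomputable def centralFactorial (s : ℕ) : R[X] :=
  X * (descPochhammer R (2 * s + 1)).comp (X + C (s : R))

theorem centralFactorial_eval_neg (s : ℕ) (x : R) :
    (centralFactorial R s).eval (-x) = (centralFactorial R s).eval x := by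
  have hodd : (descPochhammer R (2 * s + 1)).eval (-x + s) =
      -(descPochhammer R (2 * s + 1)).eval (x + s) := by
    rw [descPochhammer_eval_eq_ascPochhammer,
      show -x + s - ((2 * s + 1 : ℕ) : R) + 1 = -(x + s) by push_cast; ring,
      ascPochhammer_eval_neg_eq_descPochhammer, pow_succ, pow_mul, neg_one_sq, one_pow, one_mul,
      neg_one_mul]
  simp only [centralFactorial, eval_mul, eval_X, eval_comp, eval_add, eval_C, hodd]
  ring

theorem centralFactorial_eval_zero (s : ℕ) : (centralFactorial R s).eval 0 = 0 := by
  simp [centralFactorial]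

theorem centralFactorial_eval_natCast (s k : ℕ) :
    (centralFactorial R s).eval (k : R) =
      k * (2 * s + 1).factorial * (k + s).choose (2 * s + 1) := by
  simp only [centralFactorial, eval_mul, eval_X, eval_comp, eval_add, eval_C]
  rw [← Nat.cast_add, descPochhammer_eval_eq_descFactorial,
    Nat.descFactorial_eq_factorial_mul_choose]
  push_cast
  ring

theorem natDegree_centralFactorial_le [IsDomain R] (s : ℕ) :
    (centralFactorial R s).natDegree ≤ 2 * s + 2 := by
  refine natDegree_mul_le.trans ?_
  rw [natDegree_comp, descPochhammer_natDegree, natDegree_X_add_C]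
  linarith [natDegree_X_le (R := R)]

end Polynomial

theorem two_mul_choose_two_mul_sub_one {n : ℕ} (hn : 1 ≤ n) :
    2 * (2 * n - 1).choose n = (2 * n).choose n := by
  obtain ⟨m, rfl⟩ := Nat.exists_eq_add_of_le' hn
  rw [show 2 * (m + 1) - 1 = 2 * m + 1 by omega, show 2 * (m + 1) = 2 * m + 1 + 1 by ring,
    Nat.choose_succ_succ' (2 * m + 1) m, Nat.choose_symm_half]
  ring

theorem natCast_mul_intChoose_sub_intChoose {n k : ℕ} (hkn : k ≤ n) :
    (n : ℚ) *
        (intChoose (2 * n - 1) ((n : ℤ) - k) - intChoose (2 * n - 1) ((n : ℤ) - k - 1)) =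
      k * (2 * n).choose (n - k) := by
  unfold intChoose
  rcases hkn.eq_or_lt with rfl | hlt
  · simp
  rw [if_pos (by omega), if_pos (by omega), show ((n : ℤ) - k).toNat = n - k by omega,
    show ((n : ℤ) - k - 1).toNat = n - k - 1 by omega]
  have hpascal : ((2 * n).choose (n - k) : ℚ) =
      (2 * n - 1).choose (n - k - 1) + (2 * n - 1).choose (n - k) := by
    have h := Nat.choose_succ_succ' (2 * n - 1) (n - k - 1)
    rw [show 2 * n - 1 + 1 = 2 * n by omega, show n - k - 1 + 1 = n - k by omega] at h
    exact_mod_cast h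
  have hratio : ((n : ℚ) - k) * (2 * n - 1).choose (n - k) =
      (n + k) * (2 * n - 1).choose (n - k - 1) := by
    have h := Nat.choose_succ_right_eq (2 * n - 1) (n - k - 1)
    rw [show n - k - 1 + 1 = n - k by omega, show 2 * n - 1 - (n - k - 1) = n + k by omega] at h
    rw [← Nat.cast_sub hlt.le]
    exact_mod_cast (mul_comm _ _).trans (h.trans (mul_comm _ _))
  rw [hpascal]
  linear_combination hratio

theorem natCast_mul_zagierBstar {k m : ℕ} (hk : 1 ≤ k) (hkm : k ≤ m) :
    k * zagierBstar k =
      1 + ∑ s ∈ range m,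
        bernoulli (s + 1) / (2 * (s + 1)) * (k * (k + s).choose (2 * s + 1)) := by
  have hterm : ∀ s, (k : ℚ) * ((k + (s + 1)).choose (2 * (s + 1)) * bernoulli (s + 1) /
      (k + (s + 1 : ℕ))) =
        bernoulli (s + 1) / (2 * (s + 1)) * (k * (k + s).choose (2 * s + 1)) := by
    intro s
    have h := Nat.add_one_mul_choose_eq (k + s) (2 * s + 1)
    rw [show 2 * s + 1 + 1 = 2 * (s + 1) by ring] at h
    have hQ : ((k : ℚ) + s + 1) * (k + s).choose (2 * s + 1) =
        (k + s + 1).choose (2 * (s + 1)) * (2 * (s + 1)) := by exact_mod_cast h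
    rw [← add_assoc]
    push_cast
    field_simp
    linear_combination -bernoulli (s + 1) * hQ
  unfold zagierBstar
  rw [sum_range_succ', mul_add, mul_sum, sum_congr rfl fun s _ => hterm s, add_comm]
  congr 1
  · have hk0 : (k : ℚ) ≠ 0 := by positivity
    simp [hk0]
  · refine sum_subset (range_subset_range.2 hkm) fun s _ hs => ?_
    rw [mem_range, not_lt] at hs
    rw [Nat.choose_eq_zero_of_lt (by omega)]
    simp

theorem sum_Icc_neg_one_pow_mul_choose {n : ℕ} (hn : 1 ≤ n) :
    ∑ k ∈ Icc 1 n, (-1 : ℚ) ^ (n + k) * (2 * n).choose (n - k) =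
      -((-1) ^ n * (2 * n - 1).choose n) := by
  have h := two_mul_sum_Icc_neg_one_pow_mul_choose_mul_eval_of_even (n := n) (1 : Polynomial ℚ)
    (by rw [Polynomial.natDegree_one]; omega)
    fun _ => by rw [Polynomial.eval_one, Polynomial.eval_one]
  simp only [Polynomial.eval_one, mul_one, ← two_mul_choose_two_mul_sub_one hn] at h
  push_cast at h
  linear_combination h / 2

theorem sum_Icc_neg_one_pow_mul_choose_mul_choose_eq_zero {n s : ℕ} (h : s + 1 < n) :
    ∑ k ∈ Icc 1 n,
      (-1 : ℚ) ^ (n + k) * (2 * n).choose (n - k) * (k * (k + s).choose (2 * s + 1)) = 0 := by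
  have hP := two_mul_sum_Icc_neg_one_pow_mul_choose_mul_eval_of_even (n := n)
    (centralFactorial ℚ s) ((natDegree_centralFactorial_le s).trans_lt (by omega))
    (centralFactorial_eval_neg s)
  simp only [centralFactorial_eval_natCast, centralFactorial_eval_zero, mul_zero, neg_zero] at hP
  have hscale : ∑ k ∈ Icc 1 n, (-1 : ℚ) ^ (n + k) * (2 * n).choose (n - k) *
      (k * (2 * s + 1).factorial * (k + s).choose (2 * s + 1)) = (2 * s + 1).factorial *
      ∑ k ∈ Icc 1 n, (-1 : ℚ) ^ (n + k) * (2 * n).choose (n - k) *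
        (k * (k + s).choose (2 * s + 1)) := by
    rw [mul_sum]
    exact sum_congr rfl fun k _ => by ring
  rw [hscale] at hP
  simpa [Nat.factorial_ne_zero] using hP

theorem sum_Icc_neg_one_pow_mul_choose_mul_choose_self {n s : ℕ} (h : s + 1 = n) :
    ∑ k ∈ Icc 1 n,
      (-1 : ℚ) ^ (n + k) * (2 * n).choose (n - k) * (k * (k + s).choose (2 * s + 1)) = n := by
  rw [sum_eq_single_of_mem n (mem_Icc.2 ⟨by omega, le_rfl⟩)]
  · rw [Nat.sub_self, show n + s = 2 * s + 1 by omega, ← two_mul, pow_mul]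
    simp
  · intro k hk hkn
    rw [mem_Icc] at hk
    rw [Nat.choose_eq_zero_of_lt (show k + s < 2 * s + 1 by omega)]
    simp

theorem bernoulli_inversion (n : ℕ) (hn : 1 ≤ n) :
    bernoulli n =
      2 * n * ∑ k ∈ Finset.Icc 1 n, (-1 : ℚ) ^ (n + k) *
        (intChoose (2 * n - 1) ((n : ℤ) - k) - intChoose (2 * n - 1) ((n : ℤ) - k - 1)) *
        zagierBstar k
      + 2 * (-1 : ℚ) ^ n * ((2 * n - 1).choose n : ℚ) := by
  have hexpand : ∀ k ∈ Icc 1 n, 2 * n * ((-1 : ℚ) ^ (n + k) *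
      (intChoose (2 * n - 1) ((n : ℤ) - k) - intChoose (2 * n - 1) ((n : ℤ) - k - 1)) *
      zagierBstar k) = 2 * ((-1 : ℚ) ^ (n + k) * (2 * n).choose (n - k)) +
      ∑ s ∈ range n, bernoulli (s + 1) / (s + 1) *
        ((-1 : ℚ) ^ (n + k) * (2 * n).choose (n - k) * (k * (k + s).choose (2 * s + 1))) := by
    intro k hk
    rw [mem_Icc] at hk
    calc _ = 2 * (-1 : ℚ) ^ (n + k) * (n * (intChoose (2 * n - 1) ((n : ℤ) - k) -
          intChoose (2 * n - 1) ((n : ℤ) - k - 1))) * zagierBstar k := by ring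
      _ = 2 * (-1 : ℚ) ^ (n + k) * (2 * n).choose (n - k) * (k * zagierBstar k) := by
          rw [natCast_mul_intChoose_sub_intChoose hk.2]; ring
      _ = _ := by
          rw [natCast_mul_zagierBstar hk.1 hk.2, mul_add, mul_sum, mul_one]
          exact congrArg₂ _ (by ring) (sum_congr rfl fun s _ => by field_simp)
  rw [mul_sum, sum_congr rfl hexpand, sum_add_distrib, sum_comm, ← mul_sum,
    sum_Icc_neg_one_pow_mul_choose hn]
  simp_rw [← mul_sum]
  rw [sum_eq_single_of_mem (n - 1) (mem_range.2 (by omega)) fun s hs _ => by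
      rw [sum_Icc_neg_one_pow_mul_choose_mul_choose_eq_zero (by rw [mem_range] at hs; omega),
        mul_zero],
    sum_Icc_neg_one_pow_mul_choose_mul_choose_self (by omega), Nat.sub_add_cancel hn,
    Nat.cast_sub hn, Nat.cast_one, sub_add_cancel, div_mul_cancel₀ _ (by positivity)]
  ring
end

section
/- For positive integers n and k with 1 ≤ k ≤ n-1, the sum u(n,k) = sum_{r=k}^{n-1} (2(-1)^r r(r+1)/(n+r+1)) C(n+r+1, 2r+2) [C(2r-1, r-k) - C(2r-1, r-k-1)] equals -k if n is even and k is odd, k if n is odd and k is even, and 0 otherwise. -/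
open Finset

/-- the V sum -/
def vS (n k : ℕ) : ℤ :=
  ∑ r ∈ Finset.range n, (-1) ^ r * ((n + r).choose (2 * r + 1) : ℤ) * ((2 * r).choose (r + k) : ℤ)

/-- the W sum -/
def wS (n k : ℕ) : ℤ :=
  ∑ r ∈ Finset.range (n + 1), (-1) ^ r * ((n + r).choose (2 * r) : ℤ) * ((2 * r).choose (r + k) : ℤ)

lemma rec1 (n k : ℕ) : vS (n + 1) k = vS n k + wS n k := by
  unfold vS wS
  have h : ∀ r : ℕ, ((n + 1 + r).choose (2 * r + 1) : ℤ)
      = ((n + r).choose (2 * r) : ℤ) + ((n + r).choose (2 * r + 1) : ℤ) := by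
    intro r
    rw [show n + 1 + r = (n + r) + 1 by ring, Nat.choose_succ_succ]
    push_cast; ring
  calc ∑ r ∈ Finset.range (n + 1), (-1) ^ r * ((n + 1 + r).choose (2 * r + 1) : ℤ) * ((2 * r).choose (r + k) : ℤ)
      = ∑ r ∈ Finset.range (n + 1), ((-1) ^ r * ((n + r).choose (2 * r) : ℤ) * ((2 * r).choose (r + k) : ℤ)
        + (-1) ^ r * ((n + r).choose (2 * r + 1) : ℤ) * ((2 * r).choose (r + k) : ℤ)) := by
        refine Finset.sum_congr rfl fun r _ => ?_
        rw [h r]; ring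
    _ = _ := by
        rw [Finset.sum_add_distrib, add_comm]
        congr 1
        rw [Finset.sum_range_succ, Nat.choose_eq_zero_of_lt (by omega : n + n < 2 * n + 1)]
        push_cast; ring

lemma dpascal (a b : ℕ) :
    (a + 2).choose (b + 2) = a.choose b + 2 * a.choose (b + 1) + a.choose (b + 2) := by
  rw [show a + 2 = (a + 1) + 1 from rfl, Nat.choose_succ_succ, Nat.choose_succ_succ,
    Nat.choose_succ_succ]
  ring

lemma cpascal (s : ℕ) :
    (2 * s + 2).choose (s + 1) = 2 * ((2 * s).choose s) + 2 * ((2 * s).choose (s + 1)) := by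
  have h1 : (2 * s + 2).choose (s + 1) = (2 * s + 1).choose s + (2 * s + 1).choose (s + 1) :=
    Nat.choose_succ_succ _ _
  have h2 : (2 * s + 1).choose s = (2 * s + 1).choose (s + 1) := by
    rw [← Nat.choose_symm (show s + 1 ≤ 2 * s + 1 by omega)]
    congr 1
    omega
  have h3 : (2 * s + 1).choose (s + 1) = (2 * s).choose s + (2 * s).choose (s + 1) :=
    Nat.choose_succ_succ _ _
  omega

lemma rec2 (n m : ℕ) :
    wS (n + 1) (m + 1)
      = wS n (m + 1) - (vS (n + 1) m + 2 * vS (n + 1) (m + 1) + vS (n + 1) (m + 2)) := by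
  unfold wS vS
  rw [Finset.sum_range_succ']
  have key : ∀ i : ℕ,
      (-1 : ℤ) ^ (i + 1) * (((n + 1) + (i + 1)).choose (2 * (i + 1)) : ℤ)
          * ((2 * (i + 1)).choose ((i + 1) + (m + 1)) : ℤ)
      = (-1) ^ (i + 1) * ((n + (i + 1)).choose (2 * (i + 1)) : ℤ)
            * ((2 * (i + 1)).choose ((i + 1) + (m + 1)) : ℤ)
        - ((-1) ^ i * (((n + 1) + i).choose (2 * i + 1) : ℤ) * ((2 * i).choose (i + m) : ℤ)
          + 2 * ((-1) ^ i * (((n + 1) + i).choose (2 * i + 1) : ℤ)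
              * ((2 * i).choose (i + (m + 1)) : ℤ))
          + (-1) ^ i * (((n + 1) + i).choose (2 * i + 1) : ℤ)
              * ((2 * i).choose (i + (m + 2)) : ℤ)) := by
    intro i
    have p1 : (((n + 1) + (i + 1)).choose (2 * (i + 1)) : ℤ)
        = (((n + 1) + i).choose (2 * i + 1) : ℤ) + ((n + (i + 1)).choose (2 * (i + 1)) : ℤ) := by
      have q : ((n + 1) + i).choose ((2 * i + 1) + 1) = (n + (i + 1)).choose (2 * (i + 1)) := by
        congr 1 <;> omega
      rw [show (n + 1) + (i + 1) = ((n + 1) + i) + 1 by ring,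
        show 2 * (i + 1) = (2 * i + 1) + 1 by ring, Nat.choose_succ_succ, q]
      push_cast
      ring
    have p2 : ((2 * (i + 1)).choose ((i + 1) + (m + 1)) : ℤ)
        = ((2 * i).choose (i + m) : ℤ) + 2 * ((2 * i).choose (i + (m + 1)) : ℤ)
          + ((2 * i).choose (i + (m + 2)) : ℤ) := by
      rw [show 2 * (i + 1) = 2 * i + 2 by ring,
        show (i + 1) + (m + 1) = (i + m) + 2 by ring, dpascal,
        show (i + m) + 1 = i + (m + 1) by ring, show (i + m) + 2 = i + (m + 2) by ring]
      push_cast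
      ring
    rw [p1, p2]
    push_cast
    ring
  rw [Finset.sum_congr rfl (fun i _ => key i)]
  rw [Finset.sum_sub_distrib, Finset.sum_add_distrib, Finset.sum_add_distrib, ← Finset.mul_sum]
  have htel : ∑ i ∈ Finset.range (n + 1),
      (-1 : ℤ) ^ (i + 1) * ((n + (i + 1)).choose (2 * (i + 1)) : ℤ)
        * ((2 * (i + 1)).choose ((i + 1) + (m + 1)) : ℤ)
      = ∑ r ∈ Finset.range (n + 1),
        (-1 : ℤ) ^ r * ((n + r).choose (2 * r) : ℤ) * ((2 * r).choose (r + (m + 1)) : ℤ) := by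
    have h1 := Finset.sum_range_succ'
      (fun r => (-1 : ℤ) ^ r * ((n + r).choose (2 * r) : ℤ) * ((2 * r).choose (r + (m + 1)) : ℤ))
      (n + 1)
    have h2 := Finset.sum_range_succ
      (fun r => (-1 : ℤ) ^ r * ((n + r).choose (2 * r) : ℤ) * ((2 * r).choose (r + (m + 1)) : ℤ))
      (n + 1)
    rw [Nat.choose_eq_zero_of_lt (show n + (n + 1) < 2 * (n + 1) by omega)] at h2
    rw [show (0:ℕ) + (m + 1) = m + 1 by omega,
      show (2:ℕ) * 0 = 0 by omega, Nat.choose_zero_succ] at h1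
    push_cast at h1 h2
    linarith [h1, h2]
  rw [htel]
  rw [show ((n+1) + 0 : ℕ) = n + 1 by omega, show (2:ℕ) * 0 = 0 by omega,
    show (0:ℕ) + (m + 1) = m + 1 by omega, Nat.choose_zero_succ]
  push_cast
  ring

lemma rec3 (n : ℕ) :
    wS (n + 1) 0 = wS n 0 - (2 * vS (n + 1) 0 + 2 * vS (n + 1) 1) := by
  unfold wS vS
  rw [Finset.sum_range_succ']
  have key : ∀ i : ℕ,
      (-1 : ℤ) ^ (i + 1) * (((n + 1) + (i + 1)).choose (2 * (i + 1)) : ℤ)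
          * ((2 * (i + 1)).choose ((i + 1) + 0) : ℤ)
      = (-1) ^ (i + 1) * ((n + (i + 1)).choose (2 * (i + 1)) : ℤ)
            * ((2 * (i + 1)).choose ((i + 1) + 0) : ℤ)
        - (2 * ((-1) ^ i * (((n + 1) + i).choose (2 * i + 1) : ℤ) * ((2 * i).choose (i + 0) : ℤ))
          + 2 * ((-1) ^ i * (((n + 1) + i).choose (2 * i + 1) : ℤ)
              * ((2 * i).choose (i + 1) : ℤ))) := by
    intro i
    have p1 : (((n + 1) + (i + 1)).choose (2 * (i + 1)) : ℤ)
        = (((n + 1) + i).choose (2 * i + 1) : ℤ) + ((n + (i + 1)).choose (2 * (i + 1)) : ℤ) := by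
      have q : ((n + 1) + i).choose ((2 * i + 1) + 1) = (n + (i + 1)).choose (2 * (i + 1)) := by
        congr 1 <;> omega
      rw [show (n + 1) + (i + 1) = ((n + 1) + i) + 1 by ring,
        show 2 * (i + 1) = (2 * i + 1) + 1 by ring, Nat.choose_succ_succ, q]
      push_cast
      ring
    have p2 : ((2 * (i + 1)).choose ((i + 1) + 0) : ℤ)
        = 2 * ((2 * i).choose (i + 0) : ℤ) + 2 * ((2 * i).choose (i + 1) : ℤ) := by
      rw [show 2 * (i + 1) = 2 * i + 2 by ring, show (i + 1) + 0 = i + 1 by omega,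
        cpascal, show i + 0 = i by omega]
      push_cast
      ring
    rw [p1, p2]
    push_cast
    ring
  rw [Finset.sum_congr rfl (fun i _ => key i)]
  rw [Finset.sum_sub_distrib, Finset.sum_add_distrib, ← Finset.mul_sum, ← Finset.mul_sum]
  have htel : ∑ i ∈ Finset.range (n + 1),
      (-1 : ℤ) ^ (i + 1) * ((n + (i + 1)).choose (2 * (i + 1)) : ℤ)
        * ((2 * (i + 1)).choose ((i + 1) + 0) : ℤ)
      = (∑ r ∈ Finset.range (n + 1),
        (-1 : ℤ) ^ r * ((n + r).choose (2 * r) : ℤ) * ((2 * r).choose (r + 0) : ℤ)) - 1 := by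
    have h1 := Finset.sum_range_succ'
      (fun r => (-1 : ℤ) ^ r * ((n + r).choose (2 * r) : ℤ) * ((2 * r).choose (r + 0) : ℤ))
      (n + 1)
    have h2 := Finset.sum_range_succ
      (fun r => (-1 : ℤ) ^ r * ((n + r).choose (2 * r) : ℤ) * ((2 * r).choose (r + 0) : ℤ))
      (n + 1)
    rw [Nat.choose_eq_zero_of_lt (show n + (n + 1) < 2 * (n + 1) by omega)] at h2
    simp only [Nat.add_zero, Nat.mul_zero, Nat.choose_self, Nat.choose_zero_right]
      at h1 h2 ⊢
    push_cast at h1 h2 ⊢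
    linarith [h1, h2]
  rw [htel]
  rw [show ((n+1) + 0 : ℕ) = n + 1 by omega, show (2:ℕ) * 0 = 0 by omega,
    show (0:ℕ) + 0 = 0 by omega]
  simp only [Nat.choose_self, Nat.choose_zero_right]
  push_cast
  ring

lemma neg_one_pow_mod (t : ℕ) : (-1 : ℤ) ^ t = if t % 2 = 0 then 1 else -1 := by
  rcases Nat.even_or_odd t with h | h
  · rw [h.neg_one_pow, if_pos (Nat.even_iff.mp h)]
  · rw [h.neg_one_pow, if_neg (by rw [Nat.odd_iff] at h; omega)]

lemma vw_eval : ∀ n : ℕ,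
    (∀ k, vS n k = if k ≤ n ∧ ¬ Even (n + k) then (-1) ^ k else 0)
      ∧ (∀ k, wS n k = if k ≤ n then (-1) ^ n else 0) := by
  intro n
  induction n with
  | zero =>
    constructor
    · intro k
      unfold vS
      rw [Finset.range_zero, Finset.sum_empty]
      rw [if_neg]
      rintro ⟨h1, h2⟩
      obtain rfl := Nat.le_zero.mp h1
      exact h2 (by decide)
    · intro k
      unfold wS
      rw [Finset.sum_range_one]
      rcases k with _ | k
      · simp
      · rw [show (2 : ℕ) * 0 = 0 by omega, show (0 : ℕ) + (k + 1) = k + 1 by omega,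
          Nat.choose_zero_succ]
        rw [if_neg (by omega)]
        push_cast
        ring
  | succ n ih =>
    obtain ⟨hv, hw⟩ := ih
    have hv1 : ∀ k, vS (n + 1) k = if k ≤ n + 1 ∧ ¬ Even ((n + 1) + k) then (-1) ^ k else 0 := by
      intro k
      rw [rec1, hv k, hw k]
      simp only [neg_one_pow_mod, Nat.even_iff]
      split_ifs <;> omega
    refine ⟨hv1, fun k => ?_⟩
    rcases k with _ | m
    · rw [rec3, hv1 0, hv1 1, hw 0]
      simp only [neg_one_pow_mod, Nat.even_iff]
      clear hv hw hv1
      norm_num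
      split_ifs <;> omega
    · rw [rec2, hv1 m, hv1 (m + 1), hv1 (m + 2), hw (m + 1)]
      simp only [neg_one_pow_mod, Nat.even_iff]
      clear hv hw hv1
      split_ifs <;> omega


theorem u_sum_eval (n k : ℕ) (hk : 1 ≤ k) (hkn : k ≤ n - 1) (hn : 0 < n) :
    ∑ r ∈ Finset.Icc k (n - 1), (2 * (-1 : ℚ) ^ r * r * (r + 1) / (n + r + 1)) *
        ((n + r + 1).choose (2 * r + 2) : ℚ) *
        (intChoose (2 * r - 1) ((r : ℤ) - k) - intChoose (2 * r - 1) ((r : ℤ) - k - 1))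
      = if Even n ∧ ¬ Even k then -(k : ℚ)
        else if ¬ Even n ∧ Even k then (k : ℚ)
        else 0 := by
  have hIcc : Finset.Icc k (n - 1) = Finset.Ico k n := by
    rw [← Finset.Ico_add_one_right_eq_Icc]
    congr 1
    omega
  rw [hIcc]
  have hterm : ∀ r ∈ Finset.Ico k n,
      (2 * (-1 : ℚ) ^ r * r * (r + 1) / (n + r + 1)) *
        ((n + r + 1).choose (2 * r + 2) : ℚ) *
        (intChoose (2 * r - 1) ((r : ℤ) - k) - intChoose (2 * r - 1) ((r : ℤ) - k - 1))
      = (k : ℚ) * ((-1) ^ r * ((n + r).choose (2 * r + 1) : ℚ) * ((2 * r).choose (r + k) : ℚ)) := by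
    intro r hr
    rw [Finset.mem_Ico] at hr
    have hX : (n : ℚ) + r + 1 ≠ 0 := by positivity
    have e1 := congrArg (fun t : ℕ => (t : ℚ)) (Nat.add_one_mul_choose_eq (n + r) (2 * r + 1))
    rw [show (2 * r + 1) + 1 = 2 * r + 2 from rfl] at e1
    push_cast at e1
    have hc : (2 * (-1 : ℚ) ^ r * r * (r + 1) / (n + r + 1)) *
        ((n + r + 1).choose (2 * r + 2) : ℚ)
        = (-1) ^ r * r * ((n + r).choose (2 * r + 1) : ℚ) := by
      rw [div_mul_eq_mul_div, div_eq_iff hX]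
      linear_combination (-((-1 : ℚ) ^ r * r)) * e1
    rw [hc]
    obtain ⟨j, hj⟩ : ∃ j, r = k + j := ⟨r - k, by omega⟩
    rcases j with _ | i
    · -- r = k
      have h1 : intChoose (2 * r - 1) ((r : ℤ) - k) = ((2 * r - 1).choose 0 : ℚ) := by
        unfold intChoose
        rw [if_pos (by omega), show ((r : ℤ) - k).toNat = 0 by omega]
      have h2 : intChoose (2 * r - 1) ((r : ℤ) - k - 1) = 0 := by
        unfold intChoose
        rw [if_neg (by omega)]
      have h3 : (2 * r).choose (r + k) = 1 := by
        rw [show r + k = 2 * r by omega, Nat.choose_self]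
      rw [h1, h2, h3, Nat.choose_zero_right]
      have hri : (r : ℚ) = k := by exact_mod_cast congrArg (fun t : ℕ => (t : ℚ)) hj
      push_cast
      linear_combination ((-1 : ℚ) ^ r * ((n + r).choose (2 * r + 1) : ℚ)) * hri
    · -- r = k + i + 1
      have h1 : intChoose (2 * r - 1) ((r : ℤ) - k) = ((2 * r - 1).choose (i + 1) : ℚ) := by
        unfold intChoose
        rw [if_pos (by omega), show ((r : ℤ) - k).toNat = i + 1 by omega]
      have h2 : intChoose (2 * r - 1) ((r : ℤ) - k - 1) = ((2 * r - 1).choose i : ℚ) := by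
        unfold intChoose
        rw [if_pos (by omega), show ((r : ℤ) - k - 1).toNat = i by omega]
      have e2 := congrArg (fun t : ℕ => (t : ℚ)) (Nat.choose_succ_right_eq (2 * r - 1) i)
      rw [show 2 * r - 1 - i = r + k by omega] at e2
      push_cast at e2
      have e3 : ((2 * r).choose (r + k) : ℚ)
          = ((2 * r - 1).choose i : ℚ) + ((2 * r - 1).choose (i + 1) : ℚ) := by
        have hs : (2 * r).choose (r + k) = (2 * r).choose (i + 1) := by
          rw [← Nat.choose_symm (show r + k ≤ 2 * r by omega),
            show 2 * r - (r + k) = i + 1 by omega]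
        rw [hs, show 2 * r = (2 * r - 1) + 1 by omega, Nat.choose_succ_succ]
        push_cast
        ring
      have hri : (r : ℚ) = (k : ℚ) + i + 1 := by
        have := congrArg (fun t : ℕ => (t : ℚ)) hj
        push_cast at this
        linarith
      rw [h1, h2, e3]
      linear_combination ((-1 : ℚ) ^ r * ((n + r).choose (2 * r + 1) : ℚ)) * e2
        + ((-1 : ℚ) ^ r * ((n + r).choose (2 * r + 1) : ℚ)
            * ((2 * r - 1).choose (i + 1) : ℚ)) * hri
  rw [Finset.sum_congr rfl hterm, ← Finset.mul_sum]
  have hsub : ∑ r ∈ Finset.Ico k n,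
      ((-1 : ℚ) ^ r * ((n + r).choose (2 * r + 1) : ℚ) * ((2 * r).choose (r + k) : ℚ))
      = ∑ r ∈ Finset.range n,
        ((-1 : ℚ) ^ r * ((n + r).choose (2 * r + 1) : ℚ) * ((2 * r).choose (r + k) : ℚ)) := by
    apply Finset.sum_subset
    · intro x hx
      rw [Finset.mem_Ico] at hx
      rw [Finset.mem_range]
      omega
    · intro x hx hnx
      rw [Finset.mem_range] at hx
      rw [Finset.mem_Ico] at hnx
      rw [Nat.choose_eq_zero_of_lt (show 2 * x < x + k by omega)]
      push_cast
      ring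
  rw [hsub]
  have hq : ∑ r ∈ Finset.range n,
      ((-1 : ℚ) ^ r * ((n + r).choose (2 * r + 1) : ℚ) * ((2 * r).choose (r + k) : ℚ))
      = ((vS n k : ℤ) : ℚ) := by
    unfold vS
    push_cast
    rfl
  rw [hq, (vw_eval n).1 k]
  rw [apply_ite (fun z : ℤ => (z : ℚ))]
  simp only [neg_one_pow_mod, Nat.even_iff]
  split_ifs <;> first | (exfalso; omega) | (push_cast; ring)
end

section
/- For positive integers n and k with 1 ≤ k ≤ n-1, sum_{r=k}^{n-1} (2(-1)^r r(r+1)/(n+r+1)) C(n+r+1, 2r+2) [C(2r-1, r-k) - C(2r-1, r-k-1)] = k * sum_{r=k}^{n-1} (-1)^r C(n+r, 2r+1) C(2r, r-k). -/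
open Finset

lemma key_diff (r k : ℕ) (hk : 1 ≤ k) (hkr : k ≤ r) :
    (r : ℚ) * (intChoose (2 * r - 1) ((r : ℤ) - k) - intChoose (2 * r - 1) ((r : ℤ) - k - 1))
      = k * ((2 * r).choose (r - k) : ℚ) := by
  rcases eq_or_lt_of_le hkr with h | h
  · subst h
    simp [intChoose]
  · have h1 : (0 : ℤ) ≤ (r : ℤ) - k := by omega
    have h2 : (0 : ℤ) ≤ (r : ℤ) - k - 1 := by omega
    have t1 : ((r : ℤ) - k).toNat = r - k := by omega
    have t2 : ((r : ℤ) - k - 1).toNat = r - k - 1 := by omega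
    rw [intChoose, intChoose, if_pos h1, if_pos h2, t1, t2]
    set j := r - k - 1 with hj
    have hjk : r - k = j + 1 := by omega
    rw [hjk]
    have hjq : (j : ℚ) + 1 = (r : ℚ) - k := by
      have : (j : ℤ) + 1 = (r : ℤ) - k := by omega
      exact_mod_cast this
    have hrec : (2 * r - 1).choose (j + 1) * (j + 1) = (2 * r - 1).choose j * (2 * r - 1 - j) :=
      Nat.choose_succ_right_eq _ _
    have hsub : 2 * r - 1 - j = r + k := by omega
    rw [hsub] at hrec
    have hrecq : ((2 * r - 1).choose (j + 1) : ℚ) * ((r : ℚ) - k)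
        = ((2 * r - 1).choose j : ℚ) * ((r : ℚ) + k) := by
      rw [← hjq]; exact_mod_cast hrec
    have hm : 2 * r = 2 * r - 1 + 1 := by omega
    have hpas := Nat.choose_succ_succ (2 * r - 1) j
    rw [Nat.succ_eq_add_one, Nat.succ_eq_add_one, ← hm] at hpas
    have hc : ((2 * r).choose (j + 1) : ℚ)
        = ((2 * r - 1).choose j : ℚ) + ((2 * r - 1).choose (j + 1) : ℚ) := by
      exact_mod_cast hpas
    linear_combination -(k : ℚ) * hc + hrecq

theorem u_sum_simplification (n k : ℕ) (hk : 1 ≤ k) (hkn : k ≤ n - 1) (hn : 0 < n) :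
    ∑ r ∈ Finset.Icc k (n - 1), (2 * (-1 : ℚ) ^ r * r * (r + 1) / (n + r + 1)) *
        ((n + r + 1).choose (2 * r + 2) : ℚ) *
        (intChoose (2 * r - 1) ((r : ℤ) - k) - intChoose (2 * r - 1) ((r : ℤ) - k - 1))
      = k * ∑ r ∈ Finset.Icc k (n - 1), (-1 : ℚ) ^ r *
          ((n + r).choose (2 * r + 1) : ℚ) * ((2 * r).choose (r - k) : ℚ) := by
  rw [Finset.mul_sum]
  refine Finset.sum_congr rfl ?_
  intro r hr
  rw [Finset.mem_Icc] at hr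
  have hkr : k ≤ r := hr.1
  have hne : ((n : ℚ) + r + 1) ≠ 0 := by positivity
  have h1 : ((n + r + 1) : ℚ) * ((n + r).choose (2 * r + 1) : ℚ)
      = ((n + r + 1).choose (2 * r + 2) : ℚ) * (2 * r + 2) := by
    have := Nat.add_one_mul_choose_eq (n + r) (2 * r + 1)
    exact_mod_cast this
  have h2 := key_diff r k hk hkr
  rw [div_mul_eq_mul_div, div_mul_eq_mul_div, div_eq_iff hne]
  push_cast at h1 ⊢
  linear_combination (-(-1 : ℚ) ^ r * k * ((2 * r).choose (r - k) : ℚ)) * h1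
    + ((-1 : ℚ) ^ r * (2 * (r : ℚ) + 2) * (((n + r + 1).choose (2 * r + 2) : ℚ))) * h2
end

section
/- For every positive integer n and real x, sum_{r=0}^{n} C(n+r, 2r) x^r / (n+r) = (1/n) T_n(x/2 + 1), where T_n is the n-th Chebyshev polynomial of the first kind. -/
/-!
Since `2n · C(n+r, 2r) = (n+r) · (C(n+r, 2r) + C(n-1+r, 2r))`, the sum equals
`(b_n(x) + b_{n-1}(x)) / (2n)`, where `b_n(x) = ∑_r C(n+r, 2r) x^r` is the Morgan-Voyce
polynomial.
Pascal's rule gives `b_{n+2} = (x+2) b_{n+1} - b_n`, the Chebyshev recurrence at `y = x/2 + 1`,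
so `b_n + b_{n-1}` and `2 T_n(y)` agree once they agree for `n = 1, 2`.
-/

open Finset Polynomial

namespace Nat

theorem choose_add_two_add_choose (m k : ℕ) :
    (m + 2).choose (k + 2) + m.choose (k + 2) = 2 * (m + 1).choose (k + 2) + m.choose k := by
  rw [choose_succ_succ' (m + 1), choose_succ_succ' m k, choose_succ_succ' m (k + 1)]
  ring

theorem two_mul_succ_mul_choose (n r : ℕ) :
    2 * (n + 1) * (n + 1 + r).choose (2 * r)
      = (n + 1 + r) * ((n + 1 + r).choose (2 * r) + (n + r).choose (2 * r)) := by
  rcases le_or_gt r (n + 1) with hr | hr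
  · have h := choose_mul_succ_eq (n + r) (2 * r)
    rw [show n + r + 1 - 2 * r = n + 1 - r by omega, show n + r + 1 = n + 1 + r by omega] at h
    rw [mul_add (n + 1 + r), mul_comm (n + 1 + r) ((n + r).choose _), h]
    zify [hr]
    ring
  · simp [choose_eq_zero_of_lt (show n + 1 + r < 2 * r by omega),
      choose_eq_zero_of_lt (show n + r < 2 * r by omega)]

end Nat

section MorganVoyce

variable {R : Type*}

noncomputable def morganVoyce [CommSemiring R] (n : ℕ) (x : R) : R :=
  ∑ r ∈ range (n + 1), ((n + r).choose (2 * r) : R) * x ^ r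

theorem morganVoyce_eq_sum_range [CommSemiring R] {n m : ℕ} (h : n + 1 ≤ m) (x : R) :
    morganVoyce n x = ∑ r ∈ range m, ((n + r).choose (2 * r) : R) * x ^ r := by
  refine sum_subset (range_subset_range.mpr h) fun r _ hr => ?_
  rw [Nat.choose_eq_zero_of_lt (by simp at hr; omega), Nat.cast_zero, zero_mul]

theorem morganVoyce_add_two_add_morganVoyce [CommSemiring R] (n : ℕ) (x : R) :
    morganVoyce (n + 2) x + morganVoyce n x = (x + 2) * morganVoyce (n + 1) x := by
  have hb₁ : morganVoyce (n + 1) x = ∑ s ∈ range (n + 2),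
      ((n + 1 + (s + 1)).choose (2 * (s + 1)) : R) * x ^ (s + 1) + 1 := by
    rw [morganVoyce_eq_sum_range (show n + 2 ≤ n + 3 by omega), sum_range_succ']
    simp
  calc morganVoyce (n + 2) x + morganVoyce n x
      = ∑ r ∈ range (n + 3), (((n + 2 + r).choose (2 * r) + (n + r).choose (2 * r) : ℕ) : R)
          * x ^ r := by
        simp only [morganVoyce_eq_sum_range (show n + 1 ≤ n + 3 by omega) x,
          morganVoyce_eq_sum_range le_rfl x, ← sum_add_distrib, Nat.cast_add, add_mul]
    _ = ∑ s ∈ range (n + 2), (x * (((n + 1 + s).choose (2 * s) : ℕ) * x ^ s)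
          + 2 * (((n + 1 + (s + 1)).choose (2 * (s + 1)) : ℕ) * x ^ (s + 1))) + 2 := by
        rw [sum_range_succ']
        congr 1
        · refine sum_congr rfl fun s _ => ?_
          rw [show n + 2 + (s + 1) = n + s + 1 + 2 by ring, show n + (s + 1) = n + s + 1 by ring,
            show n + 1 + (s + 1) = n + s + 1 + 1 by ring, show n + 1 + s = n + s + 1 by ring,
            show 2 * (s + 1) = 2 * s + 2 by ring, Nat.choose_add_two_add_choose]
          push_cast
          ring
        · norm_num
    _ = (x + 2) * morganVoyce (n + 1) x := by
        rw [sum_add_distrib, ← mul_sum, ← mul_sum, ← morganVoyce_eq_sum_range le_rfl x, hb₁]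
        ring

theorem morganVoyce_add_one_add_morganVoyce [CommRing R] (n : ℕ) (y : R) :
    morganVoyce (n + 1) (2 * y - 2) + morganVoyce n (2 * y - 2)
      = 2 * (Chebyshev.T R (n + 1)).eval y := by
  induction n using Nat.twoStepInduction with
  | zero => simp [morganVoyce, sum_range_succ]; ring
  | one => simp [morganVoyce, sum_range_succ, Chebyshev.T_two]; ring
  | more n ih₀ ih₁ =>
    have hT := congrArg (eval y) (Chebyshev.T_add_two R (n + 1))
    have hb₂ := morganVoyce_add_two_add_morganVoyce (n + 1) (2 * y - 2)
    have hb₁ := morganVoyce_add_two_add_morganVoyce n (2 * y - 2)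
    simp only [eval_sub, eval_mul, eval_X, eval_ofNat] at hT
    push_cast at ih₀ ih₁ hT ⊢
    ring_nf at ih₀ ih₁ hT hb₁ hb₂ ⊢
    linear_combination hb₂ + hb₁ + (2 * y) * ih₁ - ih₀ - 2 * hT

end MorganVoyce

theorem chebyshev_T_sum (n : ℕ) (hn : 0 < n) (x : ℝ) :
    ∑ r ∈ Finset.range (n + 1), ((n + r).choose (2 * r) : ℝ) * x ^ r / (n + r)
      = (1 / n) * (Polynomial.Chebyshev.T ℝ n).eval (x / 2 + 1) := by
  obtain ⟨m, rfl⟩ : ∃ m, n = m + 1 := ⟨n - 1, by omega⟩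
  have hT := morganVoyce_add_one_add_morganVoyce m (x / 2 + 1)
  rw [show 2 * (x / 2 + 1) - 2 = x by ring] at hT
  calc ∑ r ∈ range (m + 1 + 1), ((m + 1 + r).choose (2 * r) : ℝ) * x ^ r / ((m + 1 : ℕ) + r)
      = ∑ r ∈ range (m + 2), (((m + 1 + r).choose (2 * r) : ℝ) * x ^ r
          + ((m + r).choose (2 * r) : ℝ) * x ^ r) / (2 * (m + 1)) := by
        refine sum_congr rfl fun r _ => ?_
        have h := congrArg (Nat.cast : ℕ → ℝ) (Nat.two_mul_succ_mul_choose m r)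
        rw [div_eq_div_iff (by positivity) (by positivity)]
        push_cast at h ⊢
        linear_combination x ^ r * h
    _ = (morganVoyce (m + 1) x + morganVoyce m x) / (2 * (m + 1)) := by
        rw [← sum_div, sum_add_distrib, morganVoyce,
          morganVoyce_eq_sum_range (show m + 1 ≤ m + 2 by omega)]
    _ = 1 / ((m + 1 : ℕ) : ℝ) * (Chebyshev.T ℝ ((m + 1 : ℕ) : ℤ)).eval (x / 2 + 1) := by
        rw [hT]
        push_cast
        field_simp
end

section
/- The Zagier polynomials satisfy the reflection symmetry B*_n(-x-3) = (-1)^n B*_n(x) for all n ≥ 1 and all real x. -/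
open Finset Polynomial

/-- The Zagier polynomials, evaluated at a real number. -/
noncomputable def zagierBstarPoly (n : ℕ) (x : ℝ) : ℝ :=
  ∑ r ∈ Finset.range (n + 1),
    ((n + r).choose (2 * r) : ℝ) * (Polynomial.aeval x (Polynomial.bernoulli r)) / (n + r)

lemma poly_eq_of_deriv_eq {p q : ℚ[X]} (h : derivative p = derivative q)
    (h0 : p.eval 0 = q.eval 0) : p = q := by
  have hd0 : derivative (p - q) = 0 := by rw [derivative_sub, h, sub_self]
  have ha := Polynomial.eq_C_of_derivative_eq_zero hd0
  have hc : (p - q).coeff 0 = 0 := by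
    rw [Polynomial.coeff_zero_eq_eval_zero, Polynomial.eval_sub, h0, sub_self]
  rw [hc, map_zero] at ha
  exact sub_eq_zero.mp ha

lemma bern_eval (n : ℕ) (c : ℚ) :
    (Polynomial.bernoulli n).eval c
      = ∑ k ∈ Finset.range (n + 1), (n.choose k : ℚ) * c ^ (n - k) * _root_.bernoulli k := by
  rw [Polynomial.bernoulli, Polynomial.eval_finset_sum]
  refine Finset.sum_congr rfl fun i hi => ?_
  rw [Polynomial.eval_monomial]
  ring

lemma bern_comp_add (c : ℚ) (n : ℕ) :
    (Polynomial.bernoulli n).comp (X + C c)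
      = ∑ k ∈ Finset.range (n + 1), C ((n.choose k : ℚ) * c ^ (n - k)) * Polynomial.bernoulli k := by
  induction n with
  | zero => simp
  | succ m ih =>
      refine poly_eq_of_deriv_eq ?_ ?_
      · rw [Polynomial.derivative_comp, Polynomial.derivative_bernoulli_add_one]
        rw [derivative_add, derivative_X, derivative_C, add_zero, one_mul]
        rw [mul_comp, ih]
        conv_rhs => rw [derivative_sum, Finset.sum_range_succ']
        have h0 : derivative (C (((m+1).choose 0 : ℚ) * c ^ (m+1-0)) * Polynomial.bernoulli 0) = 0 := by
          rw [Polynomial.bernoulli_zero, mul_one, derivative_C]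
        rw [h0, add_zero]
        have hcast : ((m : ℚ[X]) + 1).comp (X + C c) = C ((m+1 : ℕ) : ℚ) := by
          push_cast
          simp [add_comp]
        rw [hcast, Finset.mul_sum]
        refine Finset.sum_congr rfl fun i hi => ?_
        rw [derivative_mul, derivative_C, zero_mul, zero_add,
          Polynomial.derivative_bernoulli]
        have harg : m + 1 - (i + 1) = m - i := by omega
        rw [harg]
        have hch : (((m+1).choose (i+1) : ℕ) : ℚ) * ((i+1 : ℕ) : ℚ) = ((m+1 : ℕ) : ℚ) * (m.choose i : ℚ) := by
          norm_cast
          simpa [mul_comm, Nat.succ_eq_add_one] using (Nat.add_one_mul_choose_eq m i).symm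
        simp only [Nat.add_sub_cancel]
        rw [show ((i+1 : ℕ) : ℚ[X]) = C ((i+1:ℕ):ℚ) by simp]
        rw [← mul_assoc, ← mul_assoc, ← C_mul, ← C_mul]
        have hch' : ((m+1:ℕ):ℚ) * (↑(m.choose i) * c^(m-i)) = ↑((m+1).choose (i+1)) * c^(m-i) * ((i+1:ℕ):ℚ) := by
          push_cast at hch ⊢
          linear_combination (-(c^(m-i))) * hch
        rw [hch']
      · rw [Polynomial.eval_comp]
        simp only [eval_add, eval_X, eval_C, zero_add]
        rw [bern_eval, Polynomial.eval_finset_sum]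
        refine Finset.sum_congr rfl fun k hk => ?_
        simp [mul_comm]

lemma bern_comp_X_add_one (n : ℕ) :
    (Polynomial.bernoulli n).comp (X + 1) = Polynomial.bernoulli n + (n : ℚ[X]) * X ^ (n - 1) := by
  apply Polynomial.funext
  intro r
  rw [Polynomial.eval_comp]
  simp only [eval_add, eval_X, eval_one, eval_mul, eval_natCast, eval_pow]
  rw [add_comm r 1, Polynomial.bernoulli_eval_one_add]

lemma bern_alt_sum (n : ℕ) :
    ∑ k ∈ Finset.range (n + 1), C (((-1:ℚ))^k * ((n+1).choose k : ℚ)) * Polynomial.bernoulli k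
      = C (((n+1 : ℕ) : ℚ)) * (1 - X) ^ n := by
  have h1 := bern_comp_add (-1) (n+1)
  rw [Finset.sum_range_succ] at h1
  have h2 : (Polynomial.bernoulli (n+1)).comp (X + C (-1)) - Polynomial.bernoulli (n+1)
      = -(C (((n+1:ℕ)):ℚ) * (X - 1) ^ n) := by
    have h3 := bern_comp_X_add_one (n+1)
    have h4 := congrArg (fun p => p.comp (X - 1)) h3
    simp only [Polynomial.add_comp, Polynomial.mul_comp, Polynomial.natCast_comp,
      Polynomial.pow_comp, Polynomial.X_comp] at h4
    rw [Polynomial.comp_assoc] at h4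
    have h5 : (X + 1 : ℚ[X]).comp (X - 1) = X := by
      simp [Polynomial.add_comp]
    rw [h5, Polynomial.comp_X] at h4
    have h6 : (X + C (-1) : ℚ[X]) = X - 1 := by
      simp [Polynomial.C_neg, sub_eq_add_neg]
    rw [h6]
    rw [Nat.add_sub_cancel] at h4
    have hc : ((n+1 : ℕ) : ℚ[X]) = C (((n+1:ℕ)):ℚ) := by push_cast; simp
    rw [hc] at h4
    linear_combination -h4
  have h7 : ∑ k ∈ Finset.range (n + 1), C (((n+1).choose k : ℚ) * (-1:ℚ) ^ (n+1-k)) * Polynomial.bernoulli k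
      = -(C (((n+1:ℕ)):ℚ) * (X - 1) ^ n) := by
    rw [← h2, h1, Nat.choose_self, Nat.sub_self]
    simp
  have h8 : ∀ k ∈ Finset.range (n+1), C (((-1:ℚ))^k * ((n+1).choose k : ℚ)) * Polynomial.bernoulli k
      = C ((-1:ℚ)^(n+1)) * (C (((n+1).choose k : ℚ) * (-1:ℚ) ^ (n+1-k)) * Polynomial.bernoulli k) := by
    intro k hk
    rw [Finset.mem_range] at hk
    rw [← mul_assoc, ← C_mul]
    congr 2
    have hpow : (-1:ℚ)^(n+1) = (-1:ℚ)^(n+1-k) * (-1:ℚ)^k := by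
      rw [← pow_add]
      congr 1
      omega
    have hsq : (-1:ℚ)^(n+1-k) * (-1:ℚ)^(n+1-k) = 1 := by
      rw [← pow_add]
      exact Even.neg_one_pow ⟨n+1-k, rfl⟩
    rw [hpow]
    linear_combination (-(((n+1).choose k : ℚ) * (-1:ℚ)^k)) * hsq
  rw [Finset.sum_congr rfl h8, ← Finset.mul_sum, h7]
  have h9 : (1 - X : ℚ[X]) ^ n = C ((-1:ℚ)^n) * (X - 1)^n := by
    rw [show (1 - X : ℚ[X]) = C (-1:ℚ) * (X - 1) by rw [map_neg, map_one]; ring, mul_pow, ← C_pow]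
  rw [h9, pow_succ, C_mul]
  simp only [map_neg, map_one]
  ring

lemma bern_refl (n : ℕ) :
    (Polynomial.bernoulli n).comp (1 - X) = C ((-1:ℚ)^n) * Polynomial.bernoulli n := by
  induction n using Nat.strong_induction_on with
  | _ n ih =>
    have hsum := congrArg (fun p => p.comp (1 - X)) (Polynomial.sum_bernoulli n)
    simp only [Polynomial.sum_comp, Polynomial.smul_comp, Polynomial.monomial_comp] at hsum
    have halt := bern_alt_sum n
    have hD : ∑ k ∈ Finset.range (n+1),
        ((n+1).choose k : ℚ) • ((Polynomial.bernoulli k).comp (1 - X)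
          - C ((-1:ℚ)^k) * Polynomial.bernoulli k) = 0 := by
      have he : ∀ k ∈ Finset.range (n+1),
          ((n+1).choose k : ℚ) • ((Polynomial.bernoulli k).comp (1 - X)
            - C ((-1:ℚ)^k) * Polynomial.bernoulli k)
          = ((n+1).choose k : ℚ) • (Polynomial.bernoulli k).comp (1 - X)
            - C (((-1:ℚ))^k * ((n+1).choose k : ℚ)) * Polynomial.bernoulli k := by
        intro k hk
        rw [smul_sub]
        congr 1
        rw [Polynomial.smul_eq_C_mul, C_mul]
        ring
      rw [Finset.sum_congr rfl he, Finset.sum_sub_distrib, hsum, halt]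
      push_cast
      ring
    rw [Finset.sum_range_succ] at hD
    have hz : ∀ k ∈ Finset.range n,
        ((n+1).choose k : ℚ) • ((Polynomial.bernoulli k).comp (1 - X)
          - C ((-1:ℚ)^k) * Polynomial.bernoulli k) = 0 := by
      intro k hk
      rw [Finset.mem_range] at hk
      rw [ih k hk, sub_self, smul_zero]
    rw [Finset.sum_eq_zero hz, zero_add] at hD
    have hch : (((n+1).choose n : ℚ)) ≠ 0 := by
      rw [Nat.choose_succ_self_right]
      positivity
    rcases smul_eq_zero.mp hD with h | h
    · exact absurd h hch
    · exact sub_eq_zero.mp h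

lemma bern_key (r : ℕ) (x : ℝ) :
    (Polynomial.aeval (-x-3) (Polynomial.bernoulli r) : ℝ)
      = (-1:ℝ)^r * ∑ k ∈ Finset.range (r+1),
          (r.choose k : ℝ) * 4^(r-k) * Polynomial.aeval x (Polynomial.bernoulli k) := by
  have hrefl := congrArg (Polynomial.aeval (x+4) : ℚ[X] →ₐ[ℚ] ℝ) (bern_refl r)
  rw [Polynomial.aeval_comp] at hrefl
  have h1 : (Polynomial.aeval (x+4) (1 - X : ℚ[X]) : ℝ) = -x-3 := by
    simp [map_sub]
    ring
  rw [h1] at hrefl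
  have h2 : (Polynomial.aeval (x+4) (C ((-1:ℚ)^r) * Polynomial.bernoulli r) : ℝ)
      = (-1:ℝ)^r * Polynomial.aeval (x+4) (Polynomial.bernoulli r) := by
    rw [map_mul, Polynomial.aeval_C]
    norm_num
  rw [h2] at hrefl
  rw [hrefl]
  congr 1
  have htr := congrArg (Polynomial.aeval x : ℚ[X] →ₐ[ℚ] ℝ) (bern_comp_add 4 r)
  rw [Polynomial.aeval_comp] at htr
  have h3 : (Polynomial.aeval x (X + C (4:ℚ) : ℚ[X]) : ℝ) = x + 4 := by
    simp
  rw [h3] at htr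
  rw [htr, map_sum]
  refine Finset.sum_congr rfl fun k hk => ?_
  rw [map_mul, Polynomial.aeval_C]
  norm_num

def cnat (n r : ℕ) : ℕ := (n+r).choose (2*r) + (n+r-1).choose (2*r)

lemma cnat_zero (n : ℕ) : cnat n 0 = 2 := by simp [cnat]

lemma cnat_eq_zero {n r : ℕ} (h : n < r) : cnat n r = 0 := by
  rw [cnat, Nat.choose_eq_zero_of_lt (by omega), Nat.choose_eq_zero_of_lt (by omega)]

lemma pascal4 (m j : ℕ) :
    (m+1+1+1).choose (j+1+1) + (m+1+1).choose (j+1+1) + ((m+1).choose (j+1+1) + m.choose (j+1+1))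
      = (m+1).choose j + m.choose j + 2*((m+1+1).choose (j+1+1) + (m+1).choose (j+1+1)) := by
  simp only [Nat.choose_succ_succ']
  omega

lemma cnat_rec (n s : ℕ) :
    cnat (n+2) (s+1) + cnat n (s+1) = cnat (n+1) s + 2 * cnat (n+1) (s+1) := by
  have h := pascal4 (n+s) (2*s)
  simp only [cnat]
  have e1 : n+2+(s+1) = n+s+1+1+1 := by omega
  have e2 : n+2+(s+1)-1 = n+s+1+1 := by omega
  have e3 : n+(s+1) = n+s+1 := by omega
  have e4 : n+(s+1)-1 = n+s := by omega
  have e5 : n+1+s = n+s+1 := by omega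
  have e6 : n+1+s-1 = n+s := by omega
  have e7 : n+1+(s+1) = n+s+1+1 := by omega
  have e8 : n+1+(s+1)-1 = n+s+1 := by omega
  have e9 : 2*(s+1) = 2*s+1+1 := by omega
  simp only [e1, e3, e5, e7, Nat.add_sub_cancel, e9]
  omega

lemma cnat_mul (n r : ℕ) (hr : r ≤ n) (hn : 1 ≤ n) :
    (n+r) * cnat n r = 2*n*((n+r).choose (2*r)) := by
  have hs : n + r - 1 + 1 = n + r := by omega
  have key : (n+r-1+1) * ((n+r-1).choose (2*r)) = (n+r-1+1).choose (2*r+1) * (2*r+1) := by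
    exact_mod_cast Nat.add_one_mul_choose_eq (n+r-1) (2*r)
  rw [hs] at key
  have key2 : (n+r).choose (2*r+1) * (2*r+1) = (n+r).choose (2*r) * ((n+r) - 2*r) :=
    Nat.choose_succ_right_eq (n+r) (2*r)
  have hsub : (n+r) - 2*r = n - r := by omega
  rw [key2, hsub] at key
  calc (n+r) * cnat n r
      = (n+r) * ((n+r).choose (2*r)) + (n+r) * ((n+r-1).choose (2*r)) := by
        rw [cnat, Nat.mul_add]
    _ = (n+r) * ((n+r).choose (2*r)) + (n-r) * ((n+r).choose (2*r)) := by
        rw [key]; ring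
    _ = ((n+r)+(n-r)) * ((n+r).choose (2*r)) := by rw [← Nat.add_mul]
    _ = 2*n*((n+r).choose (2*r)) := by congr 1; omega

noncomputable def Lp : ℕ → Polynomial ℝ
  | 0 => C 2
  | 1 => X + C 2
  | (n+2) => (X + C 2) * Lp (n+1) - Lp n

lemma Lp_coeff : ∀ n r : ℕ, (Lp n).coeff r = (cnat n r : ℝ) := by
  intro n
  induction n using Nat.strong_induction_on with
  | _ n ih =>
    match n with
    | 0 =>
      intro r
      match r with
      | 0 => simp [Lp, cnat]
      | (s+1) =>
        rw [show Lp 0 = C 2 from rfl, Polynomial.coeff_C]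
        rw [cnat_eq_zero (by omega)]
        simp
    | 1 =>
      intro r
      match r with
      | 0 => simp [Lp, cnat]
      | 1 => simp [Lp, cnat]
      | (s+2) =>
        rw [show Lp 1 = X + C 2 from rfl]
        rw [Polynomial.coeff_add, Polynomial.coeff_X, Polynomial.coeff_C]
        rw [cnat_eq_zero (by omega)]
        simp
    | (m+2) =>
      intro r
      have hm1 := ih (m+1) (by omega)
      have hm0 := ih m (by omega)
      rw [show Lp (m+2) = (X + C 2) * Lp (m+1) - Lp m from rfl]
      rw [Polynomial.coeff_sub, add_mul, Polynomial.coeff_add]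
      match r with
      | 0 =>
        rw [Polynomial.mul_coeff_zero, Polynomial.coeff_X_zero, zero_mul]
        rw [Polynomial.coeff_C_mul, hm1 0, hm0 0, cnat_zero, cnat_zero, cnat_zero]
        norm_num
      | (s+1) =>
        rw [Polynomial.coeff_X_mul, Polynomial.coeff_C_mul, hm1 s, hm1 (s+1), hm0 (s+1)]
        have := cnat_rec m s
        have hc : ((cnat (m+2) (s+1) : ℝ)) + (cnat m (s+1) : ℝ)
            = (cnat (m+1) s : ℝ) + 2 * (cnat (m+1) (s+1) : ℝ) := by exact_mod_cast this
        linarith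

lemma Lp_parity : ∀ n : ℕ, (Lp n).comp (-X - C 4) = C ((-1:ℝ)^n) * Lp n := by
  intro n
  induction n using Nat.strong_induction_on with
  | _ n ih =>
    match n with
    | 0 => simp [Lp]
    | 1 =>
      rw [show Lp 1 = X + C 2 from rfl]
      rw [Polynomial.add_comp, Polynomial.X_comp, Polynomial.C_comp]
      rw [pow_one, map_neg, map_one]
      rw [show (C (4:ℝ) : Polynomial ℝ) = C 2 + C 2 from by rw [← C_add]; norm_num]
      ring
    | (m+2) =>
      have h1 := ih (m+1) (by omega)
      have h0 := ih m (by omega)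
      rw [show Lp (m+2) = (X + C 2) * Lp (m+1) - Lp m from rfl]
      rw [Polynomial.sub_comp, Polynomial.mul_comp, Polynomial.add_comp,
        Polynomial.X_comp, Polynomial.C_comp, h1, h0]
      rw [show ((-1:ℝ)^(m+1)) = (-1:ℝ)^m * (-1) from by ring,
        show ((-1:ℝ)^(m+2)) = (-1:ℝ)^m * 1 from by ring]
      simp only [C_mul, map_neg, map_one]
      rw [show (C (4:ℝ) : Polynomial ℝ) = C 2 + C 2 from by rw [← C_add]; norm_num]
      ring

noncomputable def Phi (x : ℝ) : Polynomial ℝ →ₗ[ℝ] ℝ :=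
  Polynomial.lsum (fun r => LinearMap.id.smulRight (Polynomial.aeval x (Polynomial.bernoulli r)))

lemma Phi_monomial (x : ℝ) (r : ℕ) (a : ℝ) :
    Phi x (Polynomial.monomial r a) = a * Polynomial.aeval x (Polynomial.bernoulli r) := by
  rw [Phi, Polynomial.lsum_apply, Polynomial.sum_monomial_index]
  all_goals simp

lemma monomial_comp_expand (r : ℕ) (a : ℝ) :
    (Polynomial.monomial r a).comp (-X - C 4)
      = ∑ k ∈ Finset.range (r+1),
          Polynomial.monomial k (a * (-1:ℝ)^r * 4^(r-k) * (r.choose k : ℝ)) := by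
  rw [Polynomial.monomial_comp]
  rw [show (-X - C 4 : Polynomial ℝ) = -(X + C 4) from by ring, neg_pow]
  rw [add_pow]
  rw [Finset.mul_sum, Finset.mul_sum]
  refine Finset.sum_congr rfl fun k hk => ?_
  rw [← Polynomial.C_mul_X_pow_eq_monomial]
  rw [show ((-1:Polynomial ℝ)^r) = C ((-1:ℝ)^r) from by rw [map_pow, map_neg, map_one]]
  rw [show ((C (4:ℝ))^(r-k)) = C ((4:ℝ)^(r-k)) from by rw [map_pow]]
  rw [show ((r.choose k : Polynomial ℝ)) = C ((r.choose k : ℝ)) from by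
    rw [← Polynomial.C_eq_natCast]]
  rw [C_mul, C_mul, C_mul]
  ring

lemma Phi_comp (x : ℝ) (p : Polynomial ℝ) :
    Phi (-x-3) p = Phi x (p.comp (-X - C 4)) := by
  induction p using Polynomial.induction_on' with
  | add p q hp hq => rw [map_add, Polynomial.add_comp, map_add, hp, hq]
  | monomial r a =>
    rw [Phi_monomial, monomial_comp_expand, map_sum, bern_key]
    simp only [Phi_monomial]
    rw [Finset.mul_sum, Finset.mul_sum]
    refine Finset.sum_congr rfl fun k hk => ?_
    ring

lemma Lp_eq (n : ℕ) : Lp n = ∑ r ∈ Finset.range (n+1), Polynomial.monomial r ((cnat n r : ℝ)) := by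
  ext r
  rw [Lp_coeff, Polynomial.finset_sum_coeff]
  simp only [Polynomial.coeff_monomial]
  rw [Finset.sum_ite_eq' (Finset.range (n+1)) r]
  by_cases h : r ∈ Finset.range (n+1)
  · rw [if_pos h]
  · rw [if_neg h]
    rw [Finset.mem_range] at h
    rw [cnat_eq_zero (by omega)]
    simp

lemma Phi_Lp (n : ℕ) (hn : 1 ≤ n) (x : ℝ) :
    Phi x (Lp n) = 2*n * zagierBstarPoly n x := by
  rw [Lp_eq, map_sum, zagierBstarPoly, Finset.mul_sum]
  refine Finset.sum_congr rfl fun r hr => ?_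
  rw [Finset.mem_range] at hr
  rw [Phi_monomial]
  have hne : ((n:ℝ) + (r:ℝ)) ≠ 0 := by positivity
  have hkey := cnat_mul n r (by omega) hn
  have hkeyR : ((n:ℝ)+(r:ℝ)) * (cnat n r : ℝ) = 2*(n:ℝ)*(((n+r).choose (2*r) : ℕ) : ℝ) := by
    exact_mod_cast hkey
  field_simp
  ring_nf
  ring_nf at hkeyR
  linarith [congrArg (fun t => t * Polynomial.aeval x (Polynomial.bernoulli r)) hkeyR]

theorem zagierBstarPoly_reflection (n : ℕ) (hn : 1 ≤ n) (x : ℝ) :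
    zagierBstarPoly n (-x - 3) = (-1 : ℝ) ^ n * zagierBstarPoly n x := by
  have hA := Phi_Lp n hn (-x-3)
  have hB := Phi_Lp n hn x
  have hC := Phi_comp x (Lp n)
  rw [Lp_parity n] at hC
  have hsm : Phi x (C ((-1:ℝ)^n) * Lp n) = (-1:ℝ)^n * Phi x (Lp n) := by
    rw [← Polynomial.smul_eq_C_mul, map_smul, smul_eq_mul]
  rw [hA, hsm, hB] at hC
  have hnpos : (0:ℝ) < (n:ℝ) := by exact_mod_cast hn
  have h2n : (2*(n:ℝ)) ≠ 0 := by positivity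
  have hC' : 2*(n:ℝ) * zagierBstarPoly n (-x-3)
      = 2*(n:ℝ) * ((-1:ℝ)^n * zagierBstarPoly n x) := by linear_combination hC
  exact mul_left_cancel₀ h2n hC'
end

section
/- For every n ≥ 1 and real x, B*_n(x+1) - B*_n(x) = (1/2) U_{n-1}(x/2 + 1), where U_{n-1} is the Chebyshev polynomial of the second kind. -/
open Finset Polynomial


lemma choose_pascal (a k : ℕ) :
    (a+2).choose (2*k+3) + a.choose (2*k+3) = a.choose (2*k+1) + 2 * (a+1).choose (2*k+3) := by
  have h1 : (a+2).choose (2*k+3) = (a+1).choose (2*k+2) + (a+1).choose (2*k+3) :=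
    Nat.choose_succ_succ (a+1) (2*k+2)
  have h2 : (a+1).choose (2*k+2) = a.choose (2*k+1) + a.choose (2*k+2) :=
    Nat.choose_succ_succ a (2*k+1)
  have h3 : (a+1).choose (2*k+3) = a.choose (2*k+2) + a.choose (2*k+3) :=
    Nat.choose_succ_succ a (2*k+2)
  omega

lemma pad_zero {f : ℕ → ℝ} (a b : ℕ) (hab : a ≤ b) (h : ∀ k, a ≤ k → k < b → f k = 0) :
    ∑ k ∈ range a, f k = ∑ k ∈ range b, f k :=
  Finset.sum_subset (Finset.range_subset_range.mpr hab)
    (fun k hk hk' => h k (by simpa using hk') (by simpa using hk))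

lemma S_rec (n : ℕ) (t : ℝ) :
    (∑ k ∈ range (n+3), ((n+3+k).choose (2*k+1):ℝ) * t^k)
    = (t+2) * (∑ k ∈ range (n+2), ((n+2+k).choose (2*k+1):ℝ) * t^k)
      - ∑ k ∈ range (n+1), ((n+1+k).choose (2*k+1):ℝ) * t^k := by
  have hL : (∑ k ∈ range (n+3), ((n+3+k).choose (2*k+1):ℝ) * t^k)
      = (∑ k ∈ range (n+2), ((n+4+k).choose (2*k+3):ℝ) * t^(k+1)) + ((n:ℝ)+3) := by
    rw [Finset.sum_range_succ']
    congr 1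
    · apply Finset.sum_congr rfl; intro k _
      have e1 : n+3+(k+1) = n+4+k := by omega
      have e2 : 2*(k+1)+1 = 2*k+3 := by omega
      rw [e1, e2]
    · simp [Nat.choose_one_right]
  have hT : t * (∑ k ∈ range (n+2), ((n+2+k).choose (2*k+1):ℝ) * t^k)
      = ∑ k ∈ range (n+2), ((n+2+k).choose (2*k+1):ℝ) * t^(k+1) := by
    rw [Finset.mul_sum]
    apply Finset.sum_congr rfl; intro k _; ring
  have h2 : (∑ k ∈ range (n+2), ((n+2+k).choose (2*k+1):ℝ) * t^k)
      = (∑ k ∈ range (n+2), ((n+3+k).choose (2*k+3):ℝ) * t^(k+1)) + ((n:ℝ)+2) := by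
    rw [Finset.sum_range_succ']
    congr 1
    · rw [pad_zero (n+1) (n+2) (by omega)]
      · apply Finset.sum_congr rfl; intro k _
        have e1 : n+2+(k+1) = n+3+k := by omega
        have e2 : 2*(k+1)+1 = 2*k+3 := by omega
        rw [e1, e2]
      · intro k hk hk'
        have : (n+2+(k+1)).choose (2*(k+1)+1) = 0 := Nat.choose_eq_zero_of_lt (by omega)
        simp [this]
    · simp [Nat.choose_one_right]
  have hC : (∑ k ∈ range (n+1), ((n+1+k).choose (2*k+1):ℝ) * t^k)
      = (∑ k ∈ range (n+2), ((n+2+k).choose (2*k+3):ℝ) * t^(k+1)) + ((n:ℝ)+1) := by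
    rw [Finset.sum_range_succ']
    congr 1
    · rw [pad_zero n (n+2) (by omega)]
      · apply Finset.sum_congr rfl; intro k _
        have e1 : n+1+(k+1) = n+2+k := by omega
        have e2 : 2*(k+1)+1 = 2*k+3 := by omega
        rw [e1, e2]
      · intro k hk hk'
        have : (n+1+(k+1)).choose (2*(k+1)+1) = 0 := Nat.choose_eq_zero_of_lt (by omega)
        simp [this]
    · simp [Nat.choose_one_right]
  have key : ∀ k ∈ range (n+2), ((n+4+k).choose (2*k+3):ℝ) * t^(k+1)
      = ((n+2+k).choose (2*k+1):ℝ) * t^(k+1)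
        + 2 * (((n+3+k).choose (2*k+3):ℝ) * t^(k+1))
        - ((n+2+k).choose (2*k+3):ℝ) * t^(k+1) := by
    intro k _
    have h := choose_pascal (n+2+k) k
    have h1 : n+2+k+2 = n+4+k := by omega
    have h2 : n+2+k+1 = n+3+k := by omega
    rw [h1, h2] at h
    have hR : ((n+4+k).choose (2*k+3):ℝ) + ((n+2+k).choose (2*k+3):ℝ)
        = ((n+2+k).choose (2*k+1):ℝ) + 2 * ((n+3+k).choose (2*k+3):ℝ) := by
      exact_mod_cast h
    linear_combination t^(k+1) * hR
  rw [hL, add_mul, hT, h2, hC, Finset.sum_congr rfl key, Finset.sum_sub_distrib,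
    Finset.sum_add_distrib, ← Finset.mul_sum]
  ring


lemma coef_eq (n r : ℕ) :
    ((n+r+1).choose (2*r+2) : ℝ) * (r+1) / (n+r+1) = ((n+r).choose (2*r+1) : ℝ) / 2 := by
  have h := Nat.add_one_mul_choose_eq (n+r) (2*r+1)
  have hc : ((n:ℝ)+r+1) ≠ 0 := by positivity
  have h' : ((n:ℝ)+r+1) * ((n+r).choose (2*r+1)) = ((n+r+1).choose (2*r+2) : ℝ) * (2*r+2) := by
    exact_mod_cast h
  field_simp
  nlinarith [h']

lemma aeval_bernoulli_add_one (r : ℕ) (x : ℝ) :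
    (aeval (x+1) (Polynomial.bernoulli r) : ℝ) = aeval x (Polynomial.bernoulli r) + r * x ^ (r-1) := by
  have hpoly : (Polynomial.bernoulli r).comp (X + 1) =
      Polynomial.bernoulli r + (r : ℚ[X]) * X ^ (r-1) := by
    apply Polynomial.funext
    intro q
    simp [Polynomial.eval_comp, add_comm q 1, Polynomial.bernoulli_eval_one_add r q]
  have h := congrArg (aeval x) hpoly
  simpa [Polynomial.aeval_comp] using h


lemma chebU_eval (n : ℕ) (t : ℝ) :
    (Polynomial.Chebyshev.U ℝ (n : ℤ)).eval (t / 2 + 1)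
      = ∑ k ∈ range (n+1), ((n+1+k).choose (2*k+1) : ℝ) * t ^ k := by
  induction n using Nat.strong_induction_on with
  | _ n ih =>
    match n with
    | 0 => simp [Polynomial.Chebyshev.U_zero]
    | 1 =>
      simp [Polynomial.Chebyshev.U_one, Finset.sum_range_succ]
      ring
    | (m+2) =>
      have hcast : ((m+2:ℕ) : ℤ) = (m:ℤ) + 2 := by push_cast; ring
      rw [hcast, Polynomial.Chebyshev.U_add_two]
      have h1 := ih (m+1) (by omega) 
      have h2 := ih m (by omega)
      push_cast at h1 h2
      simp only [Polynomial.eval_sub, Polynomial.eval_mul, Polynomial.eval_ofNat,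
        Polynomial.eval_X]
      rw [h1, h2]
      have := S_rec m t
      have e : m+2+1 = m+3 := by omega
      rw [e]
      rw [this]
      ring



theorem zagierBstarPoly_succ_sub (n : ℕ) (hn : 1 ≤ n) (x : ℝ) :
    zagierBstarPoly n (x + 1) - zagierBstarPoly n x
      = (1 / 2) * (Polynomial.Chebyshev.U ℝ ((n : ℤ) - 1)).eval (x / 2 + 1) := by
  obtain ⟨m, rfl⟩ : ∃ m, n = m + 1 := ⟨n - 1, by omega⟩
  have hidx : (((m+1 : ℕ) : ℤ)) - 1 = (m : ℤ) := by push_cast; ring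
  rw [hidx, chebU_eval m x]
  unfold zagierBstarPoly
  rw [← Finset.sum_sub_distrib]
  push_cast
  have step : ∀ r ∈ range (m+1+1),
      ((m+1+r).choose (2*r):ℝ) * (aeval (x+1) (Polynomial.bernoulli r)) / ((m:ℝ)+1+r)
      - ((m+1+r).choose (2*r):ℝ) * (aeval x (Polynomial.bernoulli r)) / ((m:ℝ)+1+r)
      = ((m+1+r).choose (2*r):ℝ) * ((r:ℝ) * x^(r-1)) / ((m:ℝ)+1+r) := by
    intro r _
    rw [aeval_bernoulli_add_one]
    ring
  rw [Finset.sum_congr rfl step, Finset.sum_range_succ']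
  simp only [Nat.cast_zero, mul_zero, zero_mul, zero_div, add_zero, Nat.add_sub_cancel]
  rw [Finset.mul_sum]
  apply Finset.sum_congr rfl
  intro k _
  have h := coef_eq (m+1) k
  have e1 : m+1+(k+1) = m+1+k+1 := by omega
  have e2 : 2*(k+1) = 2*k+2 := by omega
  rw [e1, e2]
  push_cast at h ⊢
  have hd : (m:ℝ)+1+(k+1) ≠ 0 := by positivity
  field_simp at h ⊢
  linear_combination x^k * h
end

section
/- For n ≥ 1 even, the derivative of the Zagier polynomial satisfies d/dx B*_n(x) = sum_{j=1}^{n/2} (2j-1) B*_{2j-1}(x). -/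
open Finset Polynomial

/-!
Differentiating term by term and using `B_r' = r B_{r-1}` writes both sides in the basis of
Bernoulli polynomials, so the theorem reduces to an identity between the coefficients of `B_m`:
`∑_{i<k} (2i+1) C(2i+1+m, 2m) / (2i+1+m) = (m+1) C(2k+m+1, 2m+2) / (2k+m+1)`.
This identity telescopes, because
`2 (l+1) C(l+m+1, 2m) / (l+m+1) = C(l+m+2, 2m+1) - C(l+m, 2m+1)` by Pascal's rule and
`(N+1) C(N, a) = (N+1-a) C(N+1, a)`.
-/

theorem Nat.cast_add_one_mul_choose {R : Type*} [CommRing R] (N a : ℕ) :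
    ((N : R) + 1) * N.choose a = ((N : R) + 1 - a) * (N + 1).choose a := by
  rcases le_or_gt a (N + 1) with h | h
  · have h' : ((N.choose a * (N + 1) : ℕ) : R) = ((N + 1).choose a * (N + 1 - a) : ℕ) :=
      congrArg _ (Nat.choose_mul_succ_eq N a)
    push_cast [Nat.cast_sub h] at h'
    linear_combination h'
  · rw [Nat.choose_eq_zero_of_lt (by omega), Nat.choose_eq_zero_of_lt h]
    simp

theorem Nat.cast_add_one_mul_choose_two_mul_div (l m : ℕ) :
    ((l : ℝ) + 1) * (l + m + 1).choose (2 * m) / (l + m + 1)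
      = (((l + m + 2).choose (2 * m + 1) : ℝ) - (l + m).choose (2 * m + 1)) / 2 := by
  have pascal₁ : ((l + m + 2).choose (2 * m + 1) : ℝ)
      = (l + m + 1).choose (2 * m) + (l + m + 1).choose (2 * m + 1) := by
    exact_mod_cast Nat.choose_succ_succ' (l + m + 1) (2 * m)
  have pascal₂ : ((l + m + 1).choose (2 * m + 1) : ℝ)
      = (l + m).choose (2 * m) + (l + m).choose (2 * m + 1) := by
    exact_mod_cast Nat.choose_succ_succ' (l + m) (2 * m)
  have absorb : ((l : ℝ) + m + 1) * (l + m).choose (2 * m)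
      = ((l : ℝ) + m + 1 - 2 * m) * (l + m + 1).choose (2 * m) := by
    exact_mod_cast Nat.cast_add_one_mul_choose (l + m) (2 * m)
  field_simp
  linear_combination -(l + m + 1 : ℝ) * (pascal₁ + pascal₂) - absorb

theorem sum_odd_mul_choose_div (k m : ℕ) :
    ∑ i ∈ range k, (2 * (i : ℝ) + 1) * (2 * i + 1 + m).choose (2 * m) / (2 * i + 1 + m)
      = ((m : ℝ) + 1) * (2 * k + m + 1).choose (2 * m + 2) / (2 * k + m + 1) := by
  have telescope : ∀ i ∈ range k,
      (2 * (i : ℝ) + 1) * (2 * i + 1 + m).choose (2 * m) / (2 * i + 1 + m)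
        = ((2 * (i + 1) + m).choose (2 * m + 1) : ℝ) / 2 - ((2 * i + m).choose (2 * m + 1) : ℝ) / 2 := by
    intro i _
    have := Nat.cast_add_one_mul_choose_two_mul_div (2 * i) m
    push_cast at this ⊢
    rw [show 2 * i + 1 + m = 2 * i + m + 1 by ring, add_right_comm _ 1 (m : ℝ), this,
      show 2 * (i + 1) + m = 2 * i + m + 2 by ring]
    ring
  rw [sum_congr rfl telescope,
    sum_range_sub (fun i ↦ ((2 * i + m).choose (2 * m + 1) : ℝ) / 2),
    Nat.choose_eq_zero_of_lt (by omega : 2 * 0 + m < 2 * m + 1)]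
  have absorb : ((2 * k + m + 1 : ℕ) : ℝ) * (2 * k + m).choose (2 * m + 1)
      = (2 * k + m + 1).choose (2 * m + 2) * (2 * m + 2 : ℕ) := by
    exact_mod_cast Nat.add_one_mul_choose_eq (2 * k + m) (2 * m + 1)
  push_cast at absorb ⊢
  field_simp
  linear_combination absorb

theorem deriv_zagierBstarPoly (n : ℕ) (x : ℝ) :
    deriv (zagierBstarPoly n) x = ∑ m ∈ range n,
      ((m : ℝ) + 1) * (n + m + 1).choose (2 * m + 2) / (n + m + 1) * aeval x (Polynomial.bernoulli m) := by
  have hasDeriv : HasDerivAt (zagierBstarPoly n) (∑ r ∈ range (n + 1),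
      ((n + r).choose (2 * r) : ℝ) * (r * aeval x (Polynomial.bernoulli (r - 1))) / (n + r)) x := by
    unfold zagierBstarPoly
    refine HasDerivAt.fun_sum fun r _ ↦ ?_
    have hB := (Polynomial.bernoulli r).hasDerivAt_aeval x
    rw [derivative_bernoulli, map_mul, map_natCast] at hB
    exact (hB.const_mul _).div_const _
  rw [hasDeriv.deriv, sum_range_succ']
  refine (add_eq_left.2 (by simp)).trans (sum_congr rfl fun m _ ↦ ?_)
  rw [← add_assoc, show 2 * (m + 1) = 2 * m + 2 by ring, Nat.add_sub_cancel]
  push_cast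
  ring

theorem zagierBstarPoly_eq_sum_range {n N : ℕ} (h : n < N) (x : ℝ) :
    zagierBstarPoly n x
      = ∑ r ∈ range N, ((n + r).choose (2 * r) : ℝ) * aeval x (Polynomial.bernoulli r) / (n + r) := by
  refine sum_subset (range_subset_range.2 h) fun r _ hr ↦ ?_
  rw [mem_range, not_lt] at hr
  rw [Nat.choose_eq_zero_of_lt (by omega)]
  simp

theorem zagierBstarPoly_deriv_even_general (n : ℕ) (hne : Even n) (x : ℝ) :
    deriv (zagierBstarPoly n) x
      = ∑ j ∈ Finset.Icc 1 (n / 2), (2 * (j : ℝ) - 1) * zagierBstarPoly (2 * j - 1) x := by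
  obtain ⟨k, rfl⟩ := hne
  rw [← two_mul]
  have odd_indices : ∑ j ∈ Icc 1 (2 * k / 2), (2 * (j : ℝ) - 1) * zagierBstarPoly (2 * j - 1) x
      = ∑ i ∈ range k, (2 * (i : ℝ) + 1) * zagierBstarPoly (2 * i + 1) x := by
    rw [← Ico_add_one_right_eq_Icc, sum_Ico_eq_sum_range, show 2 * k / 2 + 1 - 1 = k by omega]
    refine sum_congr rfl fun i _ ↦ ?_
    rw [show 2 * (1 + i) - 1 = 2 * i + 1 by omega]
    push_cast
    ring
  rw [deriv_zagierBstarPoly, odd_indices]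
  calc _ = ∑ m ∈ range (2 * k), ∑ i ∈ range k, (2 * (i : ℝ) + 1) *
          ((2 * i + 1 + m).choose (2 * m) * aeval x (Polynomial.bernoulli m) / (2 * i + 1 + m)) := by
        refine sum_congr rfl fun m _ ↦ ?_
        push_cast
        rw [← sum_odd_mul_choose_div, sum_mul]
        exact sum_congr rfl fun i _ ↦ by ring
    _ = _ := by
        rw [sum_comm]
        refine sum_congr rfl fun i hi ↦ ?_
        rw [zagierBstarPoly_eq_sum_range (N := 2 * k) (by simp at hi; omega), mul_sum]
        push_cast
        rfl

theorem zagierBstarPoly_deriv_even (n : ℕ) (hn : 1 ≤ n) (hne : Even n) (x : ℝ) :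
    deriv (zagierBstarPoly n) x
      = ∑ j ∈ Finset.Icc 1 (n / 2), (2 * (j : ℝ) - 1) * zagierBstarPoly (2 * j - 1) x :=
  zagierBstarPoly_deriv_even_general n hne x
end

section
/- For every positive integer n, B*_{2n} + n = sum_{r=0}^{2n} C(2n+r, 2r) (-1)^r B_r/(2n+r). -/
open Finset

theorem zagierBstar_even_add_n (n : ℕ) (hn : 0 < n) :
    zagierBstar (2 * n) + n =
      ∑ r ∈ Finset.range (2 * n + 1),
        ((2 * n + r).choose (2 * r) : ℚ) * (-1 : ℚ) ^ r * bernoulli r / (2 * n + r) := by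
  unfold zagierBstar
  have key : ∀ r ∈ Finset.range (2 * n + 1),
      ((2 * n + r).choose (2 * r) : ℚ) * (-1 : ℚ) ^ r * bernoulli r / (2 * n + r)
        - ((2 * n + r).choose (2 * r) : ℚ) * bernoulli r / (2 * n + r)
      = if r = 1 then (n : ℚ) else 0 := by
    intro r _
    rcases eq_or_ne r 1 with rfl | hr
    · simp only [if_pos rfl]
      rw [bernoulli_one]
      have h1 : (2 * n + 1).choose (2 * 1) = (2 * n + 1) * n := by
        rw [Nat.choose_two_right]
        rw [show 2 * n + 1 - 1 = 2 * n from rfl]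
        ring_nf
        omega
      rw [h1]
      have h2 : ((2 * n : ℕ) : ℚ) + 1 ≠ 0 := by positivity
      push_cast
      field_simp
      ring
    · simp only [if_neg hr]
      rcases Nat.even_or_odd r with he | ho
      · rw [he.neg_one_pow]; ring
      · rcases eq_or_ne r 0 with rfl | h0
        · norm_num
        · rw [bernoulli_eq_bernoulli'_of_ne_one hr, bernoulli'_eq_zero_of_odd ho (by omega)]
          ring
  have := Finset.sum_congr rfl key
  rw [Finset.sum_sub_distrib] at this
  rw [Finset.sum_ite_eq' (Finset.range (2 * n + 1)) 1 (fun _ => (n : ℚ))] at this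
  rw [if_pos (by simp; omega)] at this
  push_cast
  linarith
end

section
/- For every nonnegative integer n, B*_{2n+1}(-2) = (-1)^{n+1}/4; in particular the sequence B*_{2n+1}(-2) is periodic with period 2. -/
/-!
Write `B*_m(x) = Σ_r c_r B_r(x)` with `c_r = C(m+r, 2r)/(m+r)`. Umbrally (`B^k ↦ B_k`) this is
`f_m(B + x)` for `f_m(y) = Σ_r c_r y^r`, and `2m f_m(y - 2) = C_m(y)` is the rescaled Chebyshev
(Vieta–Lucas) polynomial, `C_m(z + z⁻¹) = z^m + z^{-m}`. Hence `2m B*_m(-2) = C_m(B)`. For odd `m`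
the polynomial `C_m` is odd, and `B_k = 0` for odd `k ≥ 3`, so only its linear coefficient
`m (-1)^((m-1)/2)` survives, against `B_1 = -1/2`.
-/

open Finset Polynomial

theorem Nat.choose_add_two_add_choose_s18 (K k : ℕ) :
    (K + 2).choose (k + 2) + K.choose (k + 2) = K.choose k + 2 * (K + 1).choose (k + 2) := by
  simp only [Nat.choose_succ_succ' K, Nat.choose_succ_succ' (K + 1)]
  ring

theorem Nat.add_one_mul_choose_add_choose (m r : ℕ) :
    (m + r + 1) * ((m + r + 1).choose (2 * r) + (m + r).choose (2 * r)) =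
      2 * (m + 1) * (m + r + 1).choose (2 * r) := by
  rcases r with _ | j
  · simp only [mul_zero, Nat.choose_zero_right]
    ring
  · have pascal := Nat.choose_succ_succ' (m + j + 1) (2 * j + 1)
    have absorb := Nat.add_one_mul_choose_eq (m + j + 1) (2 * j + 1)
    rw [show m + (j + 1) = m + j + 1 by omega, show 2 * (j + 1) = 2 * j + 1 + 1 by omega]
    zify at pascal absorb ⊢
    linear_combination (-(m + j + 2 : ℤ)) * pascal - absorb

namespace Polynomial.Chebyshev

variable (R : Type*) [CommRing R]

theorem C_natCast_add_two (m : ℕ) :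
    C R (m + 2 : ℕ) = X * C R (m + 1 : ℕ) - C R m := by
  push_cast
  exact C_add_two R m

theorem C_natCast_comp_neg_X (m : ℕ) : (C R m).comp (-X) = (-1) ^ m * C R m := by
  induction m using Nat.twoStepInduction with
  | zero => simp
  | one => simp
  | more m ih₀ ih₁ =>
    rw [C_natCast_add_two, sub_comp, mul_comp, X_comp, ih₀, ih₁]
    ring

theorem C_natCast_two_mul_eval_zero (n : ℕ) : (C R (2 * n : ℕ)).eval 0 = 2 * (-1) ^ n := by
  induction n with
  | zero => simp
  | succ n ih =>
    rw [show 2 * (n + 1) = 2 * n + 2 by ring, C_natCast_add_two, eval_sub, eval_mul, eval_X,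
      zero_mul, zero_sub, ih]
    ring

theorem coeff_one_C_natCast_two_mul_add_one (n : ℕ) :
    (C R (2 * n + 1 : ℕ)).coeff 1 = (-1) ^ n * (2 * n + 1) := by
  induction n with
  | zero => simp
  | succ n ih =>
    rw [show 2 * (n + 1) + 1 = 2 * n + 1 + 2 by ring, C_natCast_add_two, coeff_sub, coeff_X_mul,
      coeff_zero_eq_eval_zero, show 2 * n + 1 + 1 = 2 * (n + 1) by ring,
      C_natCast_two_mul_eval_zero, ih]
    push_cast
    ring

theorem coeff_C_natCast_add_one_comp_X_add_two (m r : ℕ) :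
    ((C R (m + 1 : ℕ)).comp (X + 2)).coeff r =
      ((m + r + 1).choose (2 * r) + (m + r).choose (2 * r) : ℕ) := by
  induction m using Nat.twoStepInduction generalizing r with
  | zero =>
    rcases r with _ | _ | j
    · simp
    · simp
    · simp [Nat.choose_eq_zero_of_lt (by omega : j + 2 + 1 < 2 * (j + 2)),
        Nat.choose_eq_zero_of_lt (by omega : j + 2 < 2 * (j + 2)), coeff_X]
  | one =>
    have h : (C R 2).comp (X + 2) = X ^ 2 + 4 * X + 2 := by
      simp only [C_two, sub_comp, pow_comp, X_comp, ofNat_comp]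
      ring
    rcases r with _ | _ | _ | j
    · simp [h]
    · simp [h]
    · simp [h, coeff_X]
    · simp [h, Nat.choose_eq_zero_of_lt (by omega : 1 + (j + 3) + 1 < 2 * (j + 3)),
        Nat.choose_eq_zero_of_lt (by omega : 1 + (j + 3) < 2 * (j + 3)), coeff_X]
  | more m ih₀ ih₁ =>
    rw [C_natCast_add_two, sub_comp, mul_comp, X_comp, add_mul, coeff_sub, coeff_add,
      coeff_ofNat_mul, ih₀, ih₁, sub_eq_iff_eq_add]
    rcases r with _ | j
    · simp only [coeff_X_mul_zero]
      norm_num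
    · rw [coeff_X_mul, ih₁]
      have h₁ := Nat.choose_add_two_add_choose_s18 (m + j + 2) (2 * j)
      have h₂ := Nat.choose_add_two_add_choose_s18 (m + j + 1) (2 * j)
      norm_cast
      congr 1
      ring_nf at h₁ h₂ ⊢
      omega

end Polynomial.Chebyshev

section BernoulliUmbra

variable (K : Type*) [Field K]

/-- The umbral evaluation `p ↦ p(B)`, `B ^ k ↦ B_k`, for which `B_r(x) = (B + x) ^ r`. -/
noncomputable def bernoulliUmbra : K[X] →ₗ[K] K :=
  lsum fun k => (bernoulli k : K) • LinearMap.id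

variable {K}

theorem bernoulliUmbra_apply (p : K[X]) :
    bernoulliUmbra K p = p.sum fun k a => (bernoulli k : K) * a := by
  simp [bernoulliUmbra]

variable [CharZero K]

theorem aeval_bernoulli_eq_bernoulliUmbra (r : ℕ) (x : K) :
    aeval x (Polynomial.bernoulli r) = bernoulliUmbra K ((X + C x) ^ r) := by
  rw [bernoulliUmbra_apply, sum_over_range' _ (fun _ => mul_zero _) (r + 1)
    (by rw [natDegree_pow_X_add_C]; omega), Polynomial.bernoulli, map_sum]
  refine sum_congr rfl fun i _ => ?_
  rw [aeval_monomial, coeff_X_add_C_pow]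
  simp only [eq_ratCast]
  push_cast
  ring

theorem sum_coeff_mul_aeval_bernoulli {p : K[X]} {N : ℕ} (hN : p.natDegree < N) (x : K) :
    ∑ r ∈ range N, p.coeff r * aeval x (Polynomial.bernoulli r) =
      bernoulliUmbra K (p.comp (X + C x)) := by
  simp_rw [comp, eval₂_eq_sum_range' C hN, map_sum, C_mul', map_smul,
    aeval_bernoulli_eq_bernoulliUmbra, smul_eq_mul]

theorem bernoulliUmbra_of_comp_neg_X {p : K[X]} (hp : p.comp (-X) = -p) :
    bernoulliUmbra K p = -p.coeff 1 / 2 := by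
  have hcoeff (k : ℕ) : (-1) ^ k * p.coeff k = -p.coeff k := by
    rw [← coeff_neg, ← hp, ← neg_one_mul (X : K[X]), ← C_1, ← C_neg, comp_C_mul_X_coeff,
      mul_comm]
  rw [bernoulliUmbra_apply, sum_def, sum_eq_single 1]
  · rw [_root_.bernoulli_one]
    push_cast
    ring
  · intro k _ hk
    rcases k.even_or_odd with he | ho
    · have h := hcoeff k
      rw [he.neg_one_pow, one_mul, eq_neg_iff_add_eq_zero, ← two_mul, mul_eq_zero] at h
      rw [h.resolve_left two_ne_zero, mul_zero]
    · rw [bernoulli_eq_zero_of_odd ho (by obtain ⟨j, rfl⟩ := ho; omega), Rat.cast_zero,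
        zero_mul]
  · intro h1
    rw [notMem_support_iff.mp h1, mul_zero]

end BernoulliUmbra

theorem two_mul_mul_zagierBstarPoly_eq_bernoulliUmbra (m : ℕ) (x : ℝ) :
    2 * ((m + 1 : ℕ) : ℝ) * zagierBstarPoly (m + 1) x =
      bernoulliUmbra ℝ ((Chebyshev.C ℝ (m + 1 : ℕ)).comp (X + C (x + 2))) := by
  set G := (Chebyshev.C ℝ (m + 1 : ℕ)).comp (X + 2)
  have hdeg : G.natDegree < m + 1 + 1 := by
    refine Nat.lt_succ_of_le (natDegree_le_iff_coeff_eq_zero.mpr fun N hN => ?_)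
    rw [Chebyshev.coeff_C_natCast_add_one_comp_X_add_two, Nat.choose_eq_zero_of_lt (by omega),
      Nat.choose_eq_zero_of_lt (by omega), Nat.cast_zero]
  calc 2 * ((m + 1 : ℕ) : ℝ) * zagierBstarPoly (m + 1) x
      = ∑ r ∈ range (m + 1 + 1), G.coeff r * aeval x (Polynomial.bernoulli r) := by
        rw [zagierBstarPoly, mul_sum]
        refine sum_congr rfl fun r _ => ?_
        have hchoose : ((m + r + 1 : ℕ) : ℝ) *
            (((m + r + 1).choose (2 * r) + (m + r).choose (2 * r) : ℕ) : ℝ) =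
              2 * ((m + 1 : ℕ) : ℝ) * (m + r + 1).choose (2 * r) := by
          exact_mod_cast Nat.add_one_mul_choose_add_choose m r
        rw [Chebyshev.coeff_C_natCast_add_one_comp_X_add_two, Nat.add_right_comm m 1 r]
        have hpos : ((m + 1 + r : ℕ) : ℝ) ≠ 0 := by positivity
        field_simp
        push_cast at hchoose hpos ⊢
        linear_combination -aeval x (Polynomial.bernoulli r) * hchoose
    _ = bernoulliUmbra ℝ (G.comp (X + C x)) := sum_coeff_mul_aeval_bernoulli hdeg x
    _ = bernoulliUmbra ℝ ((Chebyshev.C ℝ (m + 1 : ℕ)).comp (X + C (x + 2))) := by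
        rw [comp_assoc]
        congr 2
        simp only [add_comp, X_comp, ofNat_comp, C_add, map_ofNat]
        ring

theorem zagierBstarPoly_odd_at_neg_two (n : ℕ) :
    zagierBstarPoly (2 * n + 1) (-2) = (-1 : ℝ) ^ (n + 1) / 4 := by
  have hodd :
      (Chebyshev.C ℝ (2 * n + 1 : ℕ)).comp (-X) = -Chebyshev.C ℝ (2 * n + 1 : ℕ) := by
    rw [Chebyshev.C_natCast_comp_neg_X, (odd_two_mul_add_one n).neg_one_pow, neg_one_mul]
  have h := two_mul_mul_zagierBstarPoly_eq_bernoulliUmbra (2 * n) (-2)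
  rw [neg_add_cancel, C_0, add_zero, comp_X, bernoulliUmbra_of_comp_neg_X hodd,
    Chebyshev.coeff_one_C_natCast_two_mul_add_one] at h
  push_cast at h
  field_simp at h ⊢
  linear_combination h
end

section
/- Let b be a real number. There exists a rational function R with real coefficients such that ψ(t + b) - ψ(t) = R(t) for all t > max(0, -b) if and only if b is an integer. -/
/-!
For an integer `m`, iterating `ψ (t + 1) = ψ t + 1 / t` writes `ψ (t + m) - ψ t` as a finite sum of
terms `± 1 / (t + c)`. Conversely, if `ψ (t + b) - ψ t = R t` with `R = P / Q` in lowest terms, the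
same recurrence gives `R (t + 1) - R t = 1 / (t + b) - 1 / t`, a polynomial identity once the
denominators are cleared. Follow a string of roots `…, c - 1, c, c + 1, …` of `Q` to its two ends:
the top end `x` (with `Q (x + 1) ≠ 0`) and the point `y` just below the bottom end
(with `Q y ≠ 0 = Q (y + 1)`). Since `P` and `Q` have no common root, evaluating the identity at `x` and `y` forces
`x, y ∈ {0, -b}`; as `x - y` is a positive integer, `b = ±(x - y)`. If `Q` has no root at all,
evaluating at `0` gives `b = 0`.
-/

open Polynomial

/-- The digamma function `ψ = (log ∘ Γ)'`. -/
noncomputable def digamma (x : ℝ) : ℝ :=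
  deriv (fun t : ℝ => Real.log (Real.Gamma t)) x

theorem digamma_add_one {t : ℝ} (ht : 0 < t) : digamma (t + 1) = digamma t + t⁻¹ := by
  have hlogΓ : DifferentiableAt ℝ (fun s => Real.log (Real.Gamma s)) t :=
    (Real.differentiableAt_Gamma fun m h => by linarith [h ▸ ht, m.cast_nonneg (α := ℝ)]).log
      (Real.Gamma_pos_of_pos ht).ne'
  have hshift : (fun s => Real.log (Real.Gamma (s + 1)))
      =ᶠ[nhds t] fun s => Real.log s + Real.log (Real.Gamma s) := by
    filter_upwards [eventually_gt_nhds ht] with s hs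
    rw [Real.Gamma_add_one hs.ne', Real.log_mul hs.ne' (Real.Gamma_pos_of_pos hs).ne']
  calc digamma (t + 1) = deriv (fun s => Real.log (Real.Gamma (s + 1))) t :=
        (deriv_comp_add_const _ 1 t).symm
    _ = t⁻¹ + digamma t := by
        rw [hshift.deriv_eq, deriv_fun_add (Real.differentiableAt_log ht.ne') hlogΓ,
          Real.deriv_log]
        rfl
    _ = digamma t + t⁻¹ := add_comm _ _

theorem digamma_add_nat {t : ℝ} (ht : 0 < t) (n : ℕ) :
    digamma (t + n) = digamma t + ∑ k ∈ Finset.range n, (t + k)⁻¹ := by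
  induction n with
  | zero => simp
  | succ n ih =>
    rw [Finset.sum_range_succ, ← add_assoc, ← ih, Nat.cast_succ, ← add_assoc,
      digamma_add_one (by positivity)]

theorem exists_sum_inv_add_eq_div {K ι : Type*} [Field K] (s : Finset ι) (c : ι → K) :
    ∃ p q : K[X], q.Monic ∧
      ∀ t : K, (∀ i ∈ s, t + c i ≠ 0) → ∑ i ∈ s, (t + c i)⁻¹ = p.eval t / q.eval t := by
  classical
  refine ⟨∑ i ∈ s, ∏ j ∈ s.erase i, (X + C (c j)), ∏ i ∈ s, (X + C (c i)),
    monic_prod_of_monic _ _ fun i _ => monic_X_add_C (c i), fun t ht => ?_⟩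
  simp only [eval_finsetSum, eval_prod, eval_add, eval_X, eval_C, Finset.sum_div]
  refine Finset.sum_congr rfl fun i hi => ?_
  rw [← Finset.mul_prod_erase s _ hi, div_mul_cancel_right₀ (Finset.prod_ne_zero_iff.2 fun j hj =>
    ht j (Finset.mem_of_mem_erase hj))]

theorem exists_digamma_add_int_sub_eq_div (m : ℤ) :
    ∃ p q : ℝ[X], q ≠ 0 ∧
      ∀ t : ℝ, max 0 (-m : ℝ) < t → digamma (t + m) - digamma t = p.eval t / q.eval t := by
  obtain ⟨n, rfl | rfl⟩ := m.eq_nat_or_neg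
  · obtain ⟨p, q, hq, h⟩ := exists_sum_inv_add_eq_div (Finset.range n) fun k => (k : ℝ)
    refine ⟨p, q, hq.ne_zero, fun t ht => ?_⟩
    have ht₀ : 0 < t := (le_max_left _ _).trans_lt ht
    rw [Int.cast_natCast, digamma_add_nat ht₀, add_sub_cancel_left, h t fun k _ => by positivity]
  · obtain ⟨p, q, hq, h⟩ := exists_sum_inv_add_eq_div (Finset.range n) fun k => (k - n : ℝ)
    refine ⟨-p, q, hq.ne_zero, fun t ht => ?_⟩
    have htn : 0 < t - n := sub_pos.2 (by simpa using ht)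
    have hshift := digamma_add_nat htn n
    have hsum (k : ℕ) : t - n + k = t + (k - n) := by ring
    rw [sub_add_cancel] at hshift
    simp only [hsum] at hshift
    rw [Int.cast_neg, Int.cast_natCast, ← sub_eq_add_neg, hshift, eval_neg, neg_div,
      ← h t fun k _ => hsum k ▸ by positivity]
    ring

theorem IsRelPrime.not_isRoot_of_isRoot {R : Type*} [CommRing R] [Nontrivial R] {P Q : R[X]}
    (h : IsRelPrime P Q) {x : R} (hQ : Q.IsRoot x) : ¬P.IsRoot x :=
  fun hP => not_isUnit_X_sub_C x (h (dvd_iff_isRoot.2 hP) (dvd_iff_isRoot.2 hQ))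

theorem Polynomial.exists_isRoot_not_isRoot_add {R : Type*} [CommRing R] [IsDomain R] [CharZero R]
    {Q : R[X]} (hQ : Q ≠ 0) {a c : R} (ha : a ≠ 0) (hc : Q.IsRoot c) :
    ∃ x, (∃ n : ℕ, x = c + n * a) ∧ Q.IsRoot x ∧ ¬Q.IsRoot (x + a) := by
  by_contra! hclosed
  have hroot (n : ℕ) : Q.IsRoot (c + n * a) := by
    induction n with
    | zero => simpa using hc
    | succ n ih => simpa [add_mul, add_assoc] using hclosed _ ⟨n, rfl⟩ ih
  refine Set.infinite_of_injective_forall_mem (fun m n hmn => ?_) hroot (finite_setOfPred_isRoot hQ)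
  simpa [ha] using hmn

section ShiftEquation

variable {K : Type*} [Field K]

/-- `P / Q` solves `R (X + 1) - R X = 1 / (X + b) - 1 / X`, with denominators cleared. -/
def SolvesShiftEquation (b : K) (P Q : K[X]) : Prop :=
  (P.comp (X + 1) * Q - P * Q.comp (X + 1)) * (X * (X + C b)) = -C b * (Q * Q.comp (X + 1))

namespace SolvesShiftEquation

variable {b : K} {P Q : K[X]}

theorem eval (h : SolvesShiftEquation b P Q) (x : K) :
    (P.eval (x + 1) * Q.eval x - P.eval x * Q.eval (x + 1)) * (x * (x + b)) =
      -b * (Q.eval x * Q.eval (x + 1)) := by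
  simpa [eval_comp] using congrArg (Polynomial.eval x) h

theorem of_mul_left {g : K[X]} (hg : g ≠ 0) (h : SolvesShiftEquation b (g * P) (g * Q)) :
    SolvesShiftEquation b P Q := by
  have hg₁ : g.comp (X + 1) ≠ 0 := by rw [← C_1]; exact comp_X_add_C_ne_zero_iff.2 hg
  refine mul_left_cancel₀ (mul_ne_zero hg hg₁) ?_
  unfold SolvesShiftEquation at h
  simp only [mul_comp] at h
  linear_combination h

theorem mul_add_eq_zero_of_isRoot (h : SolvesShiftEquation b P Q) (hPQ : IsRelPrime P Q)
    {x : K} (hx : Q.IsRoot x) (hx₁ : ¬Q.IsRoot (x + 1)) : x * (x + b) = 0 := by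
  have hPx : P.eval x ≠ 0 := hPQ.not_isRoot_of_isRoot hx
  simpa [hx.eq_zero, hPx, IsRoot.def.not.1 hx₁] using h.eval x

theorem mul_add_eq_zero_of_isRoot_add_one (h : SolvesShiftEquation b P Q) (hPQ : IsRelPrime P Q)
    {y : K} (hy : ¬Q.IsRoot y) (hy₁ : Q.IsRoot (y + 1)) : y * (y + b) = 0 := by
  have hPy₁ : P.eval (y + 1) ≠ 0 := hPQ.not_isRoot_of_isRoot hy₁
  simpa [hy₁.eq_zero, hPy₁, IsRoot.def.not.1 hy] using h.eval y

theorem exists_int_eq_of_isRelPrime [CharZero K] (h : SolvesShiftEquation b P Q)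
    (hPQ : IsRelPrime P Q) (hQ : Q ≠ 0) : ∃ m : ℤ, b = m := by
  by_cases hroot : ∃ c, Q.IsRoot c
  · obtain ⟨c, hc⟩ := hroot
    obtain ⟨x, ⟨n, rfl⟩, hx, hx₁⟩ := exists_isRoot_not_isRoot_add hQ one_ne_zero hc
    obtain ⟨y₁, ⟨k, rfl⟩, hy₁, hy⟩ :=
      exists_isRoot_not_isRoot_add hQ (neg_ne_zero.2 one_ne_zero) hc
    have htop := h.mul_add_eq_zero_of_isRoot hPQ hx hx₁
    have hbot := h.mul_add_eq_zero_of_isRoot_add_one hPQ hy (by rwa [neg_add_cancel_right])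
    have hN : ((n + k : ℕ) : K) + 1 ≠ 0 := Nat.cast_add_one_ne_zero _
    rcases mul_eq_zero.1 htop with hx₀ | hx₀ <;> rcases mul_eq_zero.1 hbot with hy₀ | hy₀
    · exact absurd (by push_cast; linear_combination hx₀ - hy₀) hN
    · exact ⟨n + k + 1, by push_cast; linear_combination hy₀ - hx₀⟩
    · exact ⟨-(n + k + 1), by push_cast; linear_combination hx₀ - hy₀⟩
    · exact absurd (by push_cast; linear_combination hx₀ - hy₀) hN
  · refine ⟨0, ?_⟩
    simpa [IsRoot.def.not.1 (not_exists.1 hroot 0), IsRoot.def.not.1 (not_exists.1 hroot 1)]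
      using h.eval 0

theorem exists_int_eq [CharZero K] (h : SolvesShiftEquation b P Q) (hQ : Q ≠ 0) :
    ∃ m : ℤ, b = m := by
  obtain ⟨P, Q, g, hPQ, rfl, rfl⟩ := UniqueFactorizationMonoid.exists_reduced_factors' P Q hQ
  exact (h.of_mul_left (left_ne_zero_of_mul hQ)).exists_int_eq_of_isRelPrime hPQ
    (right_ne_zero_of_mul hQ)

end SolvesShiftEquation

end ShiftEquation

theorem solvesShiftEquation_of_digamma_sub_eq_div {p q : ℝ[X]} (hq : q ≠ 0) {b : ℝ}
    (h : ∀ t : ℝ, max 0 (-b) < t → digamma (t + b) - digamma t = p.eval t / q.eval t) :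
    SolvesShiftEquation b p q := by
  have hbad : {t : ℝ | q.IsRoot t ∨ q.IsRoot (t + 1)}.Finite :=
    (finite_setOfPred_isRoot hq).union
      ((finite_setOfPred_isRoot hq).preimage (add_left_injective 1).injOn)
  refine sub_eq_zero.1 (eq_zero_of_infinite_isRoot _
    (((Set.Ioi_infinite (max 0 (-b))).sdiff hbad).mono ?_))
  rintro t ⟨ht, hqt⟩
  simp only [Set.mem_Ioi, Set.mem_ofPred_eq, not_or, IsRoot.def] at ht hqt
  obtain ⟨hq₀, hq₁⟩ := hqt
  have ht₀ : 0 < t := (le_max_left _ _).trans_lt ht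
  have htb : 0 < t + b := by linarith [le_max_right 0 (-b)]
  have hstep : p.eval (t + 1) / q.eval (t + 1) - p.eval t / q.eval t = (t + b)⁻¹ - t⁻¹ := by
    rw [← h t ht, ← h (t + 1) (by linarith), add_right_comm, digamma_add_one htb,
      digamma_add_one ht₀]
    ring
  field_simp at hstep
  simp only [Set.mem_ofPred_eq, IsRoot.def, eval_sub, eval_mul, eval_add, eval_comp, eval_X,
    eval_C, eval_neg, eval_one]
  linear_combination hstep

theorem digamma_shift_rational_iff (b : ℝ) :
    (∃ p q : Polynomial ℝ, q ≠ 0 ∧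
        ∀ t : ℝ, max 0 (-b) < t → digamma (t + b) - digamma t = p.eval t / q.eval t)
      ↔ ∃ m : ℤ, b = m := by
  constructor
  · rintro ⟨p, q, hq, h⟩
    exact (solvesShiftEquation_of_digamma_sub_eq_div hq h).exists_int_eq hq
  · rintro ⟨m, rfl⟩
    exact exists_digamma_add_int_sub_eq_div m
end
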